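/- arXiv:2010.10394 — 11 statements merged into one kernel-verified Lean document; each statement's English description precedes it below -/
import Mathlib

section
/- Let λ < κ be infinite cardinals with cf(λ) > ω and cf(κ) ≠ cf(λ). Then every bipartite graph (A,B) with |A| = λ, |B| = κ, in which every vertex of B has infinitely many neighbours in A, contains a subgraph (A',B') with A' ⊆ A, B' ⊆ B, |A'| = λ' for some cardinal λ' < λ, |B'| = κ, and every vertex of B' has infinitely many neighbours in A'. -/
/-!
Identify `A` with the initial ordinal `λ`. Since `cf λ > ω`, every vertex `b ∈ B` has infinitely
many neighbours below some `h b < λ`. The levels `B_γ = {b | h b ≤ γ}` increase with `γ` and cover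
`B`. If every level had size `< κ`, then `γ ↦ |B_γ|` would be a monotone map from `λ` onto a
cofinal subset of `κ`, forcing `cf κ = cf λ`. So some `B_γ` has size `κ`, and it has infinitely
many neighbours in `A' = {a | a < γ}`, of size `< λ`.
-/

open Cardinal Set Order

theorem Monotone.cof_eq_of_isCofinal_range {ι γ : Type u} [LinearOrder ι] [LinearOrder γ]
    [NoMaxOrder γ] {φ : ι → γ} (hφ : Monotone φ) (hrange : IsCofinal (range φ)) :
    Order.cof ι = Order.cof γ := by
  refine le_antisymm ?_ ?_
  · obtain ⟨T, hT, hTcard⟩ := exists_cof_eq γ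
    have hpre (t : T) : ∃ x, (t : γ) ≤ φ x := by simpa using hrange t
    choose g hg using hpre
    refine (cof_le (s := range g) fun y => ?_).trans (mk_range_le.trans hTcard.le)
    obtain ⟨c, hc⟩ := exists_gt (φ y)
    obtain ⟨t, ht, hct⟩ := hT c
    exact ⟨g ⟨t, ht⟩, mem_range_self _,
      (hφ.reflect_lt (hc.trans_le (hct.trans (hg ⟨t, ht⟩)))).le⟩
  · obtain ⟨S, hS, hScard⟩ := exists_cof_eq ι
    exact (cof_le (hS.image hφ hrange)).trans (mk_image_le.trans hScard.le)

theorem Set.Infinite.exists_infinite_lt_of_aleph0_lt_cof {α ι : Type*} [LinearOrder ι]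
    {s : Set α} (hs : s.Infinite) (f : α → ι) (hι : ℵ₀ < Order.cof ι) :
    ∃ x, {a ∈ s | f a < x}.Infinite := by
  set e := hs.natEmbedding s
  have hbdd : ¬ IsCofinal (range fun n => f (e n)) := fun hcof =>
    ((cof_le hcof).trans (le_aleph0_iff_set_countable.2 (countable_range _))).not_gt hι
  obtain ⟨x, hx⟩ := not_isCofinal_iff.1 hbdd
  refine ⟨x, (infinite_range_of_injective (Subtype.val_injective.comp e.injective)).mono ?_⟩
  rintro _ ⟨n, rfl⟩
  exact ⟨(e n).2, hx _ (mem_range_self n)⟩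

section Levels

variable {ι β : Type u} [LinearOrder ι] (h : β → ι)

theorem exists_lt_mk_setOf_le (hβ : ℵ₀ ≤ #β) (hι : Order.cof ι < #β) {c : Cardinal}
    (hc : c < #β) : ∃ x, c < #{b | h b ≤ x} := by
  by_contra! hsmall
  obtain ⟨S, hS, hScard⟩ := exists_cof_eq ι
  have hcover : (univ : Set β) ⊆ ⋃ x : S, {b | h b ≤ x} := fun b _ => by
    obtain ⟨x, hx, hbx⟩ := hS (h b)
    exact mem_iUnion.2 ⟨⟨x, hx⟩, hbx⟩
  have : #β < #β := calc #β
    _ = #(univ : Set β) := mk_univ.symm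
    _ ≤ #S * ⨆ x : S, #{b | h b ≤ x} := (mk_le_mk_of_subset hcover).trans (mk_iUnion_le _)
    _ ≤ #S * c := by gcongr; exact ciSup_le' fun x => hsmall x
    _ < #β := mul_lt_of_lt hβ (hScard.trans_lt hι) hc
  exact this.false

theorem exists_mk_setOf_le_eq_of_cof_ne (hβ : ℵ₀ ≤ #β) (hι : Order.cof ι < #β)
    (hne : (#β).ord.cof ≠ Order.cof ι) : ∃ x, #{b | h b ≤ x} = #β := by
  by_contra! hne'
  have hsmall (x : ι) : #{b | h b ≤ x} < #β := (mk_set_le _).lt_of_ne (hne' x)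
  have := Cardinal.noMaxOrder hβ
  let φ : ι → (#β).ord.ToType := fun x => Ordinal.ToType.mk ⟨_, ord_lt_ord.2 (hsmall x)⟩
  have hφ : Monotone φ := fun x y hxy => Ordinal.ToType.mk.monotone <|
    ord_le_ord.2 <| mk_le_mk_of_subset fun b hb => le_trans hb hxy
  have hrange : IsCofinal (range φ) := fun y => by
    obtain ⟨x, hx⟩ := exists_lt_mk_setOf_le h hβ hι
      (lt_ord.1 (mem_Iio.1 (Ordinal.ToType.mk.symm y).2))
    exact ⟨φ x, mem_range_self x, Ordinal.ToType.mk.symm_apply_le.1 (lt_ord.2 hx).le⟩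
  exact hne (by rw [← Ordinal.cof_toType, hφ.cof_eq_of_isCofinal_range hrange])

end Levels

theorem stmt_0_general {α β : Type u} (E : α → β → Prop)
    (lam kap : Cardinal.{u})
    (hlt : lam < kap)
    (hcof_lam : ℵ₀ < lam.ord.cof)
    (hcof_ne : kap.ord.cof ≠ lam.ord.cof)
    (hA : #α = lam) (hB : #β = kap)
    (hE : ∀ b : β, {a : α | E a b}.Infinite) :
    ∃ (A' : Set α) (B' : Set β) (lam' : Cardinal.{u}),
      lam' < lam ∧ #A' = lam' ∧ #B' = kap ∧
      ∀ b ∈ B', {a : α | a ∈ A' ∧ E a b}.Infinite := by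
  obtain ⟨f⟩ : Nonempty (α ≃ lam.ord.ToType) := Cardinal.eq.1 (by rw [mk_toType, card_ord, hA])
  have hcof : Order.cof lam.ord.ToType = lam.ord.cof := Ordinal.cof_toType _
  choose h hh using fun b =>
    (hE b).exists_infinite_lt_of_aleph0_lt_cof f (hcof ▸ hcof_lam)
  have hcof_lt : lam.ord.cof < kap := (Ordinal.cof_ord_le lam).trans_lt hlt
  obtain ⟨x, hx⟩ := exists_mk_setOf_le_eq_of_cof_ne h (hB ▸ hcof_lam.le.trans hcof_lt.le)
    (by rwa [hB, hcof]) (by rwa [hB, hcof])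
  refine ⟨f ⁻¹' Iio x, {b | h b ≤ x}, _, ?_, rfl, hx.trans hB, fun b hb => ?_⟩
  · rw [mk_preimage_equiv]
    simpa using mk_Iio_lt x
  · exact (hh b).mono fun a ha => ⟨ha.2.trans_le hb, ha.1⟩

theorem stmt_0 {α β : Type u} (E : α → β → Prop)
    (lam kap : Cardinal.{u})
    (hlam_inf : ℵ₀ ≤ lam) (hlt : lam < kap)
    (hcof_lam : ℵ₀ < lam.ord.cof)
    (hcof_ne : kap.ord.cof ≠ lam.ord.cof)
    (hA : #α = lam) (hB : #β = kap)
    (hE : ∀ b : β, {a : α | E a b}.Infinite) :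
    ∃ (A' : Set α) (B' : Set β) (lam' : Cardinal.{u}),
      lam' < lam ∧ #A' = lam' ∧ #B' = kap ∧
      ∀ b ∈ B', {a : α | a ∈ A' ∧ E a b}.Infinite :=
  stmt_0_general E lam kap hlt hcof_lam hcof_ne hA hB hE
end

section
/- Assume GCH. Let λ < cf(κ) be cardinals with λ > ℵ₀ and with cf(κ) not of the form μ⁺ for any cardinal μ of countable cofinality. Then every (λ,κ)-graph contains a (λ',κ)-subgraph for some cardinal λ' < λ. -/
/-!
Choose for every `b ∈ B` an injective sequence `ℕ → A` of its neighbours. Under GCH,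
`λ ^ ℵ₀ < cf κ`: if `λ⁺ < cf κ` this is just `λ ^ ℵ₀ ≤ 2 ^ λ = λ⁺`; if `cf κ = λ⁺`, the
hypothesis on `cf κ` makes `cf λ` uncountable, so every countable sequence in `λ` is bounded
and `λ ^ ℵ₀ ≤ λ · sup_{μ < λ} μ ^ ℵ₀ = λ`. Hence, by the pigeonhole principle for `cf κ`,
`κ` many vertices of `B` get the same sequence, whose countable range is the new `A`.
-/

open Cardinal

theorem mk_nat_arrow_le_of_aleph0_lt_cof {ι : Type u} [LinearOrder ι] (h : ℵ₀ < Order.cof ι) :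
    #(ℕ → ι) ≤ #ι * ⨆ c : ι, #(ℕ → Set.Iio c) := by
  have hcover : (⋃ c : ι, {f : ℕ → ι | ∀ n, f n < c}) = Set.univ := by
    refine Set.eq_univ_of_forall fun f => ?_
    obtain ⟨c, hc⟩ : ∃ c, ∀ y ∈ Set.range f, y < c := not_isCofinal_iff.1 fun hf =>
      (Order.cof_le hf).trans (Set.countable_range f).le_aleph0 |>.not_gt h
    exact Set.mem_iUnion.2 ⟨c, fun n => hc _ (Set.mem_range_self n)⟩
  calc #(ℕ → ι) = #(⋃ c : ι, {f : ℕ → ι | ∀ n, f n < c}) := by rw [hcover, mk_univ]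
    _ ≤ #ι * ⨆ c : ι, #{f : ℕ → ι | ∀ n, f n < c} := mk_iUnion_le _
    _ ≤ #ι * ⨆ c : ι, #(ℕ → Set.Iio c) := by
      gcongr with c
      · exact bddAbove_of_small
      · exact mk_le_of_injective (f := fun f n => ⟨f.1 n, f.2 n⟩) fun f g hfg =>
          Subtype.ext <| funext fun n => congrArg Subtype.val (congrFun hfg n)

theorem power_aleph0_le_of_forall_lt {lam : Cardinal.{u}} (hlam : ℵ₀ ≤ lam)
    (hcf : ℵ₀ < lam.ord.cof) (h : ∀ m < lam, m ^ ℵ₀ ≤ lam) : lam ^ ℵ₀ ≤ lam := by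
  have hι : #lam.ord.ToType = lam := by rw [mk_toType, card_ord]
  have hpow (ι : Type u) : #ι ^ ℵ₀ = #(ℕ → ι) := by
    rw [mk_arrow, lift_id', mk_nat, lift_aleph0]
  rw [← Ordinal.cof_toType] at hcf
  calc lam ^ ℵ₀ = #(ℕ → lam.ord.ToType) := by rw [← hpow, hι]
    _ ≤ lam * ⨆ c, #(ℕ → Set.Iio c) := hι ▸ mk_nat_arrow_le_of_aleph0_lt_cof hcf
    _ ≤ lam * lam := by
      gcongr
      exact ciSup_le' fun c => hpow _ ▸ h _ (by simpa using mk_Iio_lt c)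
    _ = lam := mul_eq_self hlam

theorem power_aleph0_le_of_lt_of_gch
    (hGCH : ∀ c : Cardinal.{u}, ℵ₀ ≤ c → (2 : Cardinal.{u}) ^ c = Order.succ c)
    {m lam : Cardinal.{u}} (hm : m < lam) (hlam : ℵ₀ < lam) : m ^ ℵ₀ ≤ lam := by
  set n := max m ℵ₀
  have hn : ℵ₀ ≤ n := le_max_right _ _
  calc m ^ ℵ₀ ≤ n ^ n := power_le_power_right (le_max_left _ _) |>.trans <|
        power_le_power_left (aleph0_pos.trans_le hn).ne' hn
    _ = Order.succ n := by rw [power_self_eq hn, hGCH n hn]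
    _ ≤ lam := Order.succ_le_of_lt (max_lt hm hlam)

theorem power_aleph0_lt_cof_of_gch
    (hGCH : ∀ c : Cardinal.{u}, ℵ₀ ≤ c → (2 : Cardinal.{u}) ^ c = Order.succ c)
    {lam kap : Cardinal.{u}} (hlam : ℵ₀ < lam) (hlt : lam < kap.ord.cof)
    (hshape : ¬ ∃ μ : Cardinal.{u}, μ.ord.cof = ℵ₀ ∧ kap.ord.cof = Order.succ μ) :
    lam ^ ℵ₀ < kap.ord.cof := by
  rcases (Order.succ_le_of_lt hlt).lt_or_eq with hsucc | hsucc
  · exact (power_aleph0_le_of_lt_of_gch hGCH (Order.lt_succ lam)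
      (hlam.trans (Order.lt_succ lam))).trans_lt hsucc
  · have hcf : ℵ₀ < lam.ord.cof :=
      (Ordinal.aleph0_le_cof_iff.2 (Ordinal.one_lt_cof_iff.2 (isSuccLimit_ord hlam.le))).lt_of_ne'
        fun hcf => hshape ⟨lam, hcf, hsucc.symm⟩
    calc lam ^ ℵ₀ ≤ lam := power_aleph0_le_of_forall_lt hlam.le hcf
          fun m hm => power_aleph0_le_of_lt_of_gch hGCH hm hlam
      _ < kap.ord.cof := hsucc ▸ Order.lt_succ lam

theorem exists_infinite_countable_common_neighbours {α β : Type u} (E : α → β → Prop)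
    (hβ : ℵ₀ ≤ #β) (hcard : #α ^ ℵ₀ < (#β).ord.cof) (hE : ∀ b, {a | E a b}.Infinite) :
    ∃ s : Set α, #s = ℵ₀ ∧ #{b | ∀ a ∈ s, E a b} = #β := by
  let f (b : β) : ℕ → α := fun n => ((hE b).natEmbedding _ n : α)
  have hf_inj (b : β) : Function.Injective (f b) := fun _ _ h =>
    ((hE b).natEmbedding _).injective (Subtype.val_injective h)
  obtain ⟨g, hg⟩ := infinite_pigeonhole f hβ <| by
    rwa [mk_arrow, lift_id', mk_nat, lift_aleph0]
  obtain ⟨b₀, rfl : f b₀ = g⟩ : (f ⁻¹' {g}).Nonempty := by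
    rw [← Set.nonempty_coe_sort, ← mk_ne_zero_iff, hg]
    exact (aleph0_pos.trans_le hβ).ne'
  have hfiber : f ⁻¹' {f b₀} ⊆ {b | ∀ a ∈ Set.range (f b₀), E a b} := by
    rintro b (hb : f b = f b₀) _ ⟨n, rfl⟩
    exact hb ▸ ((hE b).natEmbedding _ n).2
  refine ⟨Set.range (f b₀), ?_, (mk_set_le _).antisymm (hg ▸ mk_le_mk_of_subset hfiber)⟩
  simpa using mk_range_eq_of_injective (hf_inj b₀)

theorem stmt_2 {α β : Type u} (E : α → β → Prop)
    (hGCH : ∀ c : Cardinal.{u}, ℵ₀ ≤ c → (2 : Cardinal.{u}) ^ c = Order.succ c)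
    (lam kap : Cardinal.{u})
    (hlam : ℵ₀ < lam) (hlt : lam < kap.ord.cof)
    (hshape : ¬ ∃ μ : Cardinal.{u}, μ.ord.cof = ℵ₀ ∧ kap.ord.cof = Order.succ μ)
    (hA : #α = lam) (hB : #β = kap)
    (hE : ∀ b : β, {a : α | E a b}.Infinite) :
    ∃ (A' : Set α) (B' : Set β) (lam' : Cardinal.{u}),
      lam' < lam ∧ #A' = lam' ∧ #B' = kap ∧
      ∀ b ∈ B', {a : α | a ∈ A' ∧ E a b}.Infinite := by
  subst hA hB
  have hβ : ℵ₀ ≤ #β := (hlam.trans (hlt.trans_le (Ordinal.cof_ord_le _))).le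
  obtain ⟨s, hs, hB'⟩ := exists_infinite_countable_common_neighbours E hβ
    (power_aleph0_lt_cof_of_gch hGCH hlam hlt hshape) hE
  refine ⟨s, {b | ∀ a ∈ s, E a b}, ℵ₀, hlam, hs, hB', fun b hb => ?_⟩
  have hsub : s ⊆ {a | a ∈ s ∧ E a b} := fun a ha => ⟨ha, hb a ha⟩
  exact (Set.infinite_coe_iff.1 (infinite_iff.2 hs.ge)).mono hsub
end

section
/- Assume GCH. If κ is an infinite cardinal with cf(κ) > λ and cf(κ) is not the successor of a cardinal of countable cofinality, then every (λ,κ)-graph contains an (ℵ₀,κ)-subgraph. -/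
/-! Under GCH, `λ ^ ℵ₀ < cf κ`. If `λ⁺ < cf κ` this is `λ ^ ℵ₀ ≤ 2 ^ λ = λ⁺`. If `cf κ = λ⁺`,
then by hypothesis `cf λ > ℵ₀`, so every countable sequence in `λ` is bounded below `λ` and
`λ ^ ℵ₀ ≤ Σ_{μ < λ} μ ^ ℵ₀ ≤ λ`, since `μ ^ ℵ₀ ≤ 2 ^ (μ + ℵ₀) = (μ + ℵ₀)⁺ ≤ λ`.
Now choose for every `b ∈ B` an injective sequence of neighbours of `b`. There are at most
`λ ^ ℵ₀ < cf κ` such sequences, so by the pigeonhole principle `κ` vertices of `B` choose the same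
one, and its range is the required countable `A'`. -/

open Cardinal

universe u

open Set in
theorem Cardinal.mk_arrow_le_sum_power_Iio {ι α : Type u} [LinearOrder α]
    (h : #ι < Order.cof α) : #(ι → α) ≤ sum fun a : α => #(Iio a) ^ #ι := by
  have hbounded : ∀ f : ι → α, ∃ a, ∀ i, f i < a := by
    intro f
    have hnot : ¬ IsCofinal (range f) := fun hf =>
      (Order.cof_le hf).trans mk_range_le |>.not_gt h
    simpa [IsCofinal, mem_range] using hnot
  choose bound hbound using hbounded
  calc #(ι → α) ≤ #(Σ a : α, ι → Iio a) :=
        mk_le_of_injective (f := fun f => ⟨bound f, fun i => ⟨f i, hbound f i⟩⟩) fun f g hfg => by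
          funext i
          simpa using congrArg (fun x : Σ a : α, ι → Iio a => ((x.2 i : Iio x.1) : α)) hfg
    _ = sum fun a : α => #(Iio a) ^ #ι := by simp only [mk_sigma, power_def]

def GCH : Prop :=
  ∀ c : Cardinal.{u}, ℵ₀ ≤ c → (2 : Cardinal.{u}) ^ c = Order.succ c

namespace GCH

theorem power_le_succ_max (hGCH : GCH.{u}) {a b : Cardinal.{u}} (hb : ℵ₀ ≤ b) :
    a ^ b ≤ Order.succ (max a b) :=
  calc a ^ b ≤ (2 ^ a) ^ b := power_le_power_right (cantor a).le
    _ = 2 ^ (a * b) := power_mul.symm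
    _ ≤ 2 ^ max a b := power_le_power_left two_ne_zero (mul_le_max_of_aleph0_le_right hb)
    _ = Order.succ (max a b) := hGCH _ (hb.trans (le_max_right a b))

theorem power_aleph0_le_self (hGCH : GCH.{u}) {c : Cardinal.{u}} (hc : ℵ₀ < c.ord.cof) :
    c ^ ℵ₀ ≤ c := by
  have hc_inf : ℵ₀ < c := hc.trans_le (Ordinal.cof_ord_le c)
  have hIio : ∀ a : c.ord.ToType, #(Set.Iio a) ^ ℵ₀ ≤ c := fun a =>
    (hGCH.power_le_succ_max le_rfl).trans <| Order.succ_le_of_lt <|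
      max_lt (by simpa using mk_Iio_lt a (by simp)) hc_inf
  calc c ^ ℵ₀ = #(ULift ℕ → c.ord.ToType) := by
        rw [← power_def, mk_ord_toType, mk_uLift, mk_nat, lift_aleph0]
    _ ≤ sum fun a : c.ord.ToType => #(Set.Iio a) ^ ℵ₀ := by
        simpa using mk_arrow_le_sum_power_Iio (ι := ULift ℕ) (α := c.ord.ToType)
          (by simpa [Ordinal.cof_toType] using hc)
    _ ≤ sum fun _ : c.ord.ToType => c := sum_le_sum _ _ hIio
    _ = c := by rw [sum_const', mk_ord_toType, mul_eq_self hc_inf.le]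

theorem power_aleph0_lt (hGCH : GCH.{u}) {lam θ : Cardinal.{u}} (hlam : ℵ₀ ≤ lam)
    (hlt : lam < θ) (hθ : θ = Order.succ lam → lam.ord.cof ≠ ℵ₀) : lam ^ ℵ₀ < θ := by
  rcases (Order.succ_le_of_lt hlt).lt_or_eq with hsucc | hsucc
  · calc lam ^ ℵ₀ ≤ Order.succ lam := by
          simpa [max_eq_left hlam] using hGCH.power_le_succ_max (a := lam) le_rfl
      _ < θ := hsucc
  · have hcof : ℵ₀ < lam.ord.cof :=
      (Ordinal.aleph0_le_cof_iff.2 (Ordinal.one_lt_cof_iff.2 (isSuccLimit_ord hlam))).lt_of_ne'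
        (hθ hsucc.symm)
    exact (hGCH.power_aleph0_le_self hcof).trans_lt hlt

end GCH

theorem exists_countable_subgraph_of_power_aleph0_lt_cof {α β : Type u} (E : α → β → Prop)
    (hβ : ℵ₀ ≤ #β) (hpow : #α ^ ℵ₀ < (#β).ord.cof) (hE : ∀ b : β, {a : α | E a b}.Infinite) :
    ∃ (A' : Set α) (B' : Set β), A'.Countable ∧ #B' = #β ∧
      ∀ b ∈ B', {a : α | a ∈ A' ∧ E a b}.Infinite := by
  have hnbhd : ∀ b, ∃ g : ℕ → α, Function.Injective g ∧ ∀ n, E (g n) b := fun b =>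
    let e := (hE b).natEmbedding
    ⟨fun n => e n, Subtype.val_injective.comp e.injective, fun n => (e n).2⟩
  choose g hg_inj hg_adj using hnbhd
  obtain ⟨g₀, hg₀⟩ := infinite_pigeonhole g hβ (by simpa [mk_arrow] using hpow)
  refine ⟨Set.range g₀, g ⁻¹' {g₀}, Set.countable_range g₀, hg₀, fun b (hb : g b = g₀) => ?_⟩
  refine (Set.infinite_range_of_injective (hg_inj b)).mono ?_
  rintro _ ⟨n, rfl⟩
  exact ⟨⟨n, by rw [hb]⟩, hg_adj b n⟩

theorem stmt_3 {α β : Type u} (E : α → β → Prop)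
    (hGCH : ∀ c : Cardinal.{u}, ℵ₀ ≤ c → (2 : Cardinal.{u}) ^ c = Order.succ c)
    (lam kap : Cardinal.{u})
    (hlam : ℵ₀ ≤ lam) (hkapinf : ℵ₀ ≤ kap) (hlt : lam < kap.ord.cof)
    (hshape : ¬ ∃ μ : Cardinal.{u}, μ.ord.cof = ℵ₀ ∧ kap.ord.cof = Order.succ μ)
    (hA : #α = lam) (hB : #β = kap)
    (hE : ∀ b : β, {a : α | E a b}.Infinite) :
    ∃ (A' : Set α) (B' : Set β),
      A'.Countable ∧ #B' = kap ∧
      ∀ b ∈ B', {a : α | a ∈ A' ∧ E a b}.Infinite := by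
  subst hA hB
  have hpow : #α ^ ℵ₀ < (#β).ord.cof :=
    GCH.power_aleph0_lt hGCH hlam hlt fun hsucc hcof => hshape ⟨#α, hcof, hsucc⟩
  exact exists_countable_subgraph_of_power_aleph0_lt_cof E hkapinf hpow hE
end

section
/- Assume GCH. Every (λ,κ)-graph with cf(κ) = ω contains an (ℵ₀,κ)-subgraph. -/
/-!
Fix for every `b ∈ B` an enumeration `ℕ → A` of infinitely many of its neighbours. Under GCH
there are only `λ ^ ℵ₀ ≤ 2 ^ λ = λ⁺ < κ` such enumerations, while `κ` is a singular, hence limit,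
cardinal. So the classes of vertices sharing an enumeration have sizes cofinal in `κ`, and since
`cf κ = ω` countably many classes already cover `κ` vertices of `B`. Their countably many
enumerations only use countably many vertices of `A`.
-/

open Cardinal Set

universe u

namespace Cardinal

theorem exists_cofinal_family_lt (κ : Cardinal.{u}) :
    ∃ (ι : Type u) (c : ι → Cardinal.{u}),
      #ι = κ.ord.cof ∧ (∀ i, c i < κ) ∧ ∀ d < κ, ∃ i, d ≤ c i := by
  obtain ⟨s, hs_cofinal, hs_card⟩ := Order.exists_cof_eq κ.ord.ToType
  rw [Ordinal.cof_toType] at hs_card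
  refine ⟨s, fun x ↦ (Ordinal.ToType.toOrd x.1 : Ordinal).card, hs_card,
    fun x ↦ lt_ord.mp (Ordinal.ToType.toOrd x.1).2, fun d hd ↦ ?_⟩
  obtain ⟨x, hx, hdx⟩ := hs_cofinal (Ordinal.ToType.mk ⟨d.ord, ord_lt_ord.mpr hd⟩)
  refine ⟨⟨x, hx⟩, ?_⟩
  have : d.ord ≤ (Ordinal.ToType.toOrd x : Ordinal) := by
    have := Ordinal.ToType.mk.symm.monotone hdx
    rwa [OrderIso.symm_apply_apply] at this
  simpa using Ordinal.card_le_card this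

theorem exists_le_mk_preimage_singleton {β γ : Type u} (F : β → γ) (hβ : ℵ₀ ≤ #β)
    (hγ : #γ < #β) {c : Cardinal.{u}} (hc : c < #β) : ∃ r, c ≤ #(F ⁻¹' {r}) := by
  by_contra! hfibers
  have : #β ≤ #γ * c := mk_le_mk_mul_of_mk_preimage_le F fun r ↦ (hfibers r).le
  exact this.not_gt (mul_lt_of_lt hβ hγ hc)

theorem exists_set_mk_le_cof_mk_preimage_eq {β γ : Type u} (F : β → γ)
    (hβ : Order.IsSuccLimit #β) (hγ : #γ < #β) :
    ∃ S : Set γ, #S ≤ (#β).ord.cof ∧ #(F ⁻¹' S) = #β := by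
  obtain ⟨ι, c, hι, hc_lt, hc_cofinal⟩ := exists_cofinal_family_lt #β
  choose r hr using fun i ↦
    exists_le_mk_preimage_singleton F (aleph0_le_of_isSuccLimit hβ) hγ (hc_lt i)
  refine ⟨range r, hι ▸ mk_range_le, (mk_set_le _).antisymm (le_of_forall_lt fun d hd ↦ ?_)⟩
  obtain ⟨i, hi⟩ := hc_cofinal _ (hβ.succ_lt hd)
  calc d < Order.succ d := Order.lt_succ d
    _ ≤ #(F ⁻¹' {r i}) := hi.trans (hr i)
    _ ≤ #(F ⁻¹' range r) := mk_le_mk_of_subset (preimage_mono (by simp))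

theorem power_aleph0_le_two_power {c : Cardinal} (hc : ℵ₀ ≤ c) : c ^ ℵ₀ ≤ 2 ^ c :=
  (power_le_power_left (aleph0_pos.trans_le hc).ne' hc).trans_eq (power_self_eq hc)

end Cardinal

theorem stmt_4 {α β : Type u} (E : α → β → Prop)
    (hGCH : ∀ c : Cardinal.{u}, ℵ₀ ≤ c → (2 : Cardinal.{u}) ^ c = Order.succ c)
    (lam kap : Cardinal.{u})
    (hlam : ℵ₀ ≤ lam) (hlt : lam < kap)
    (hcof : kap.ord.cof = ℵ₀)
    (hA : #α = lam) (hB : #β = kap)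
    (hE : ∀ b : β, {a : α | E a b}.Infinite) :
    ∃ (A' : Set α) (B' : Set β),
      A'.Countable ∧ #B' = kap ∧
      ∀ b ∈ B', {a : α | a ∈ A' ∧ E a b}.Infinite := by
  subst hA hB
  have hsingular : (#β).IsSingular :=
    ⟨hlam.trans hlt.le, hcof ▸ (hlam.trans_lt hlt).ne⟩
  have henum_small : #(ℕ → α) < #β := by
    have : #(ℕ → α) = #α ^ ℵ₀ := by simp
    calc #(ℕ → α) ≤ Order.succ #α := by
          rw [this, ← hGCH _ hlam]; exact power_aleph0_le_two_power hlam
      _ < #β := hsingular.isSuccLimit.succ_lt hlt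
  let F : β → ℕ → α := fun b n ↦ (hE b).natEmbedding _ n
  obtain ⟨S, hS_card, hS_preimage⟩ :=
    exists_set_mk_le_cof_mk_preimage_eq F hsingular.isSuccLimit henum_small
  refine ⟨⋃ r ∈ S, range r, F ⁻¹' S, ?_, hS_preimage, fun b hb ↦ ?_⟩
  · have hS : S.Countable := le_aleph0_iff_set_countable.mp (hcof ▸ hS_card)
    exact hS.biUnion fun r _ ↦ countable_range r
  · refine (infinite_range_of_injective
      (Subtype.val_injective.comp ((hE b).natEmbedding _).injective)).mono ?_
    rintro _ ⟨n, rfl⟩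
    exact ⟨mem_biUnion hb ⟨n, rfl⟩, ((hE b).natEmbedding _ n).2⟩
end

section
/- Let λ be a singular cardinal of countable cofinality and κ > λ a regular cardinal. Suppose (f_α)_{α<κ} is a κ-scale: there are a strictly increasing sequence (λ_n)_{n∈ℕ} of uncountable regular cardinals with supremum λ and f_α(n) < λ_n for all α, n, and an ideal I on ℕ containing all finite sets, such that (1) α < β implies f_α <_I f_β, and (2) for every g ∈ ∏_n λ_n there is α < κ with g <_I f_α. Then for every countable subtree S of the tree λ^{<ω} of finite sequences into λ, fewer than κ many of the functions f_α are branches of S (i.e., have all their finite initial segments in S). -/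
open Cardinal

/-- The initial segment of length `n` of an ω-sequence. -/
def seg {α : Type*} (f : ℕ → α) (n : ℕ) : List α := (List.range n).map f

/-- An ideal on ℕ: a proper subset of the powerset containing ∅,
closed under subsets and finite unions. -/
def IsIdealOnNat (I : Set (Set ℕ)) : Prop :=
  (∅ : Set ℕ) ∈ I ∧ (Set.univ : Set ℕ) ∉ I ∧
  (∀ s t : Set ℕ, s ⊆ t → t ∈ I → s ∈ I) ∧
  (∀ s t : Set ℕ, s ∈ I → t ∈ I → s ∪ t ∈ I)

/-- `f <_I g` : the set where `f` is not below `g` lies in the ideal `I`. -/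
def LtI (I : Set (Set ℕ)) (f g : ℕ → Ordinal.{0}) : Prop := {n : ℕ | g n ≤ f n} ∈ I

/-! A countable tree has countably many nodes, so for each `n` the values `x(n) < λₙ` taken by
its nodes form a countable set, bounded by some `g n < λₙ` because `cf λₙ > ℵ₀`. Every branch
`f i` is then pointwise below `g`, while `g <_I f a` for some `a`. If `a < i`, then `f a <_I f i`
and hence `g <_I f i`, impossible for a function pointwise below `g`. So all branches are indexed
by `Iic a`, a set of size `< κ`. -/

namespace Ordinal

theorem sSup_lt_of_countable {s : Set Ordinal.{u}} {a : Ordinal.{u}} (hs : s.Countable)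
    (ha : ℵ₀ < a.cof) (hlt : ∀ x ∈ s, x < a) : sSup s < a := by
  refine sSup_lt_of_lt_cof ?_ hlt
  rw [← lift_cof]
  exact (le_aleph0_iff_set_countable.2 hs).trans_lt
    (by rwa [← lift_aleph0.{u + 1, u}, Cardinal.lift_lt])

end Ordinal

theorem seg_succ_getD {α : Type*} (h : ℕ → α) (n : ℕ) (d : α) :
    (seg h (n + 1)).getD n d = h n := by
  simp [seg]

theorem exists_bound_branches_of_countable {S : Set (List Ordinal.{u})} (hS : S.Countable)
    (b : ℕ → Ordinal.{u}) (hb : ∀ n, ℵ₀ < (b n).cof) :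
    ∃ g : ℕ → Ordinal.{u}, (∀ n, g n < b n) ∧
      ∀ h : ℕ → Ordinal.{u}, (∀ n, seg h n ∈ S) → (∀ n, h n < b n) → ∀ n, h n ≤ g n := by
  set V : ℕ → Set Ordinal.{u} := fun n => (fun l => l.getD n 0) '' S ∩ Set.Iio (b n)
  refine ⟨fun n => sSup (V n), fun n => ?_, fun h hS hb n => ?_⟩
  · exact Ordinal.sSup_lt_of_countable ((hS.image _).mono Set.inter_subset_left) (hb n)
      fun _ hx => hx.2
  · refine le_csSup (bddAbove_Iio.mono Set.inter_subset_right) ⟨⟨_, hS (n + 1), ?_⟩, hb n⟩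
    exact seg_succ_getD h n 0

theorem LtI.trans {I : Set (Set ℕ)} (hI : IsIdealOnNat I) {f g h : ℕ → Ordinal.{0}}
    (hfg : LtI I f g) (hgh : LtI I g h) : LtI I f h := by
  refine hI.2.2.1 _ _ (fun n (hn : h n ≤ f n) => ?_) (hI.2.2.2 _ _ hfg hgh)
  by_cases hgn : g n ≤ f n
  · exact Or.inl hgn
  · exact Or.inr (hn.trans (not_le.1 hgn).le)

theorem LtI.exists_lt {I : Set (Set ℕ)} (hI : IsIdealOnNat I) {f g : ℕ → Ordinal.{0}}
    (hfg : LtI I f g) : ∃ n, f n < g n := by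
  by_contra! h
  exact hI.2.1 (Set.eq_univ_of_forall h ▸ hfg)

theorem stmt_9_general (lam kap : Cardinal.{0})
    (hkap_reg : kap.IsRegular)
    -- the scale is indexed by a well-order of order type κ
    (ι : Type) [LinearOrder ι]
    (hseg : ∀ i : ι, #{j : ι | j < i} < kap)
    (lamn : ℕ → Cardinal.{0})
    (hreg : ∀ n, (lamn n).IsRegular ∧ ℵ₀ < lamn n)
    (I : Set (Set ℕ)) (hI : IsIdealOnNat I)
    (f : ι → ℕ → Ordinal.{0}) (hbd : ∀ i n, f i n < (lamn n).ord)
    (hinc : ∀ i j : ι, i < j → LtI I (f i) (f j))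
    (hcofin : ∀ g : ℕ → Ordinal.{0}, (∀ n, g n < (lamn n).ord) → ∃ i, LtI I g (f i)) :
    ∀ S : Set (List Ordinal.{0}), S.Countable →
      (∀ l ∈ S, ∀ l' : List Ordinal.{0}, l' <+: l → l' ∈ S) →
      (∀ l ∈ S, ∀ x ∈ l, x < lam.ord) →
      #{i : ι // ∀ n, seg (f i) n ∈ S} < kap := by
  intro S hS _ _
  obtain ⟨g, hg_lt, hg_ge⟩ := exists_bound_branches_of_countable hS (fun n => (lamn n).ord)
    fun n => by rw [(hreg n).1.cof_ord]; exact (hreg n).2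
  obtain ⟨a, ha⟩ := hcofin g hg_lt
  have hbranch_le : ∀ i, (∀ n, seg (f i) n ∈ S) → i ≤ a := by
    intro i hi
    by_contra! hai
    obtain ⟨n, hn⟩ := (ha.trans hI (hinc a i hai)).exists_lt hI
    exact (hg_ge (f i) hi (hbd i) n).not_gt hn
  calc #{i : ι // ∀ n, seg (f i) n ∈ S} ≤ #(Set.Iic a) := mk_le_mk_of_subset hbranch_le
    _ = #(insert a (Set.Iio a) : Set ι) := by rw [Set.Iio_insert]
    _ < kap := mk_insert_le.trans_lt (add_one_lt_of_lt hkap_reg.aleph0_le (hseg a))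

theorem stmt_9 (lam kap : Cardinal.{0})
    (hlam_unc : ℵ₀ < lam) (hlam_cof : lam.ord.cof = ℵ₀)
    (hkap_reg : kap.IsRegular) (hlk : lam < kap)
    -- the scale is indexed by a well-order of order type κ
    (ι : Type) [LinearOrder ι] [WellFoundedLT ι] (hι : #ι = kap)
    (hseg : ∀ i : ι, #{j : ι | j < i} < kap)
    (lamn : ℕ → Cardinal.{0}) (hmono : StrictMono lamn)
    (hreg : ∀ n, (lamn n).IsRegular ∧ ℵ₀ < lamn n)
    (hsup : (⨆ n, lamn n) = lam)
    (I : Set (Set ℕ)) (hI : IsIdealOnNat I)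
    (hfin : ∀ s : Set ℕ, s.Finite → s ∈ I)
    (f : ι → ℕ → Ordinal.{0}) (hbd : ∀ i n, f i n < (lamn n).ord)
    (hinc : ∀ i j : ι, i < j → LtI I (f i) (f j))
    (hcofin : ∀ g : ℕ → Ordinal.{0}, (∀ n, g n < (lamn n).ord) → ∃ i, LtI I g (f i)) :
    ∀ S : Set (List Ordinal.{0}), S.Countable →
      (∀ l ∈ S, ∀ l' : List Ordinal.{0}, l' <+: l → l' ∈ S) →
      (∀ l ∈ S, ∀ x ∈ l, x < lam.ord) →
      #{i : ι // ∀ n, seg (f i) n ∈ S} < kap :=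
  stmt_9_general lam kap hkap_reg ι hseg lamn hreg I hI f hbd hinc hcofin
end

section
/- Let T be an order tree (a partial order with a least element in which every down-set ⌈t⌉ = {t' : t' ≤ t} is well-ordered). If T is an Aronszajn tree with an antichain partition {U_n : n ∈ ℕ}, then for every limit point t ∈ T one can choose an increasing ω-sequence t_0 < t_1 < ⋯ cofinal in {t' : t' < t} such that the following holds: for every t ∈ T there is a finite set S_t ⊆ {t' : t' < t} such that for every t' > t, all chosen sequence-elements of t' that lie below t belong to S_t. -/
/-!
Colour each point by the index of the antichain containing it; below any point the colouring is
injective. At a limit `t`, let `t_{n+1}` be the point of least colour in `(t_n, t)`. Since the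
intervals shrink and colours along a chain are distinct, the colours of the `t_n` strictly
increase, so `t_{n+1}` has colour at least `n`; this forces cofinality, since a point `s < t` above
every `t_n` would bound all these colours. For `t < t'`, the terms of the sequence of `t'` below `t`
are the terms of the analogous greedy sequence built with the intervals `(s_n, t]`, whose colours
are at most that of `t`. Hence only its first `c t + 1` terms can occur, which gives `S_t`.
-/

open Cardinal

/-- A point of an order tree is a limit if it is above some point but has no
immediate predecessor. -/
def IsLimitPt {T : Type u} [PartialOrder T] (t : T) : Prop :=
  (∃ s, s < t) ∧ ¬ ∃ s : T, s ⋖ t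

section GreedySequence

variable {T : Type u} (c : T → ℕ)

/-- The default `d` is returned when `S` is empty. -/
noncomputable def leastColored (S : Set T) (d : T) : T :=
  open Classical in if h : S.Nonempty then Function.argminOn c S h else d

variable {c}

theorem leastColored_mem {S : Set T} (d : T) (hS : S.Nonempty) : leastColored c S d ∈ S := by
  rw [leastColored, dif_pos hS]
  exact Function.argminOn_mem c S hS

theorem color_leastColored_le {S : Set T} (d : T) {x : T} (hx : x ∈ S) :
    c (leastColored c S d) ≤ c x := by
  rw [leastColored, dif_pos ⟨x, hx⟩]
  exact Function.argminOn_le c S hx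

theorem leastColored_eq_of_subset {S S' : Set T} (d : T) (hSS' : S ⊆ S') (hc : Set.InjOn c S')
    (h : leastColored c S' d ∈ S) : leastColored c S d = leastColored c S' d := by
  have hS := leastColored_mem (c := c) d ⟨_, h⟩
  exact hc (hSS' hS) (hSS' h) <|
    le_antisymm (color_leastColored_le d h) (color_leastColored_le d (hSS' hS))

variable [PartialOrder T] (c)

/-- With `B = Set.Iio t` for a limit `t` and `c` the antichain index, this is the choice
`t_0, t_1, …` at `t`. -/
noncomputable def greedySeq (r : T) (B : Set T) : ℕ → T
  | 0 => r
  | n + 1 => leastColored c (Set.Ioi (greedySeq r B n) ∩ B) (greedySeq r B n)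

variable {c} {r : T} {B : Set T}

theorem greedySeq_succ (n : ℕ) :
    greedySeq c r B (n + 1) =
      leastColored c (Set.Ioi (greedySeq c r B n) ∩ B) (greedySeq c r B n) :=
  rfl

theorem greedySeq_succ_mem {n : ℕ} (hn : (Set.Ioi (greedySeq c r B n) ∩ B).Nonempty) :
    greedySeq c r B (n + 1) ∈ Set.Ioi (greedySeq c r B n) ∩ B :=
  leastColored_mem _ hn

theorem color_greedySeq_succ_le {n : ℕ} {y : T} (hy : y ∈ Set.Ioi (greedySeq c r B n) ∩ B) :
    c (greedySeq c r B (n + 1)) ≤ c y :=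
  color_leastColored_le _ hy

theorem monotone_greedySeq : Monotone (greedySeq c r B) := by
  refine monotone_nat_of_le_succ fun n => ?_
  by_cases hn : (Set.Ioi (greedySeq c r B n) ∩ B).Nonempty
  · exact (greedySeq_succ_mem hn).1.le
  · rw [greedySeq_succ, leastColored, dif_neg hn]

/-- The colours strictly increase as long as the sequence can move. -/
theorem le_color_greedySeq_succ (hc : Set.InjOn c B) {n : ℕ}
    (hne : ∀ m ≤ n, (Set.Ioi (greedySeq c r B m) ∩ B).Nonempty) :
    n ≤ c (greedySeq c r B (n + 1)) := by
  induction n with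
  | zero => exact Nat.zero_le _
  | succ n ih =>
    have hcur := greedySeq_succ_mem (hne n n.le_succ)
    have hnext := greedySeq_succ_mem (hne (n + 1) le_rfl)
    have hlt : c (greedySeq c r B (n + 1)) < c (greedySeq c r B (n + 1 + 1)) :=
      (color_greedySeq_succ_le ⟨hcur.1.trans hnext.1, hnext.2⟩).lt_of_ne
        fun h => hnext.1.ne (hc hcur.2 hnext.2 h)
    have := ih fun m hm => hne m (hm.trans n.le_succ)
    omega

theorem greedySeq_eq_of_subset {B' : Set T} (hBB' : B ⊆ B') (hB : IsLowerSet B)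
    (hc : Set.InjOn c B') {n : ℕ} (hn : greedySeq c r B' n ∈ B) :
    greedySeq c r B n = greedySeq c r B' n := by
  induction n with
  | zero => rfl
  | succ n ih =>
    have hprev := ih (hB (monotone_greedySeq n.le_succ) hn)
    rw [greedySeq_succ, greedySeq_succ, hprev]
    by_cases hne : (Set.Ioi (greedySeq c r B' n) ∩ B').Nonempty
    · exact leastColored_eq_of_subset _ (Set.inter_subset_inter_right _ hBB')
        (hc.mono Set.inter_subset_right) ⟨(greedySeq_succ_mem hne).1, hn⟩
    · have hne' : ¬(Set.Ioi (greedySeq c r B' n) ∩ B).Nonempty :=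
        fun h => hne (h.mono (Set.inter_subset_inter_right _ hBB'))
      rw [leastColored, leastColored, dif_neg hne, dif_neg hne']

end GreedySequence

section Tree

variable {T : Type u} [PartialOrder T] {c : T → ℕ} {r : T}

theorem injOn_of_isAntichain {U : ℕ → Set T} (hanti : ∀ n, IsAntichain (· ≤ ·) (U n))
    (hcU : ∀ t, t ∈ U (c t)) {s : Set T} (hs : IsChain (· ≤ ·) s) : Set.InjOn c s := by
  intro x hx y hy hxy
  by_contra hne
  rcases hs hx hy hne with h | h
  · exact hanti (c x) (hcU x) (hxy ▸ hcU y) hne h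
  · exact hanti (c x) (hxy ▸ hcU y) (hcU x) (Ne.symm hne) h

theorem IsLimitPt.nonempty_Ioi_inter_Iio {t s : T} (ht : IsLimitPt t) (hs : s < t) :
    (Set.Ioi s ∩ Set.Iio t).Nonempty := by
  obtain ⟨y, hsy, hyt⟩ := (not_covBy_iff hs).mp fun h => ht.2 ⟨s, h⟩
  exact ⟨y, hsy, hyt⟩

theorem greedySeq_lt_of_isLimitPt (hr : ∀ x, r ≤ x) {t : T} (ht : IsLimitPt t) (n : ℕ) :
    greedySeq c r (Set.Iio t) n < t := by
  induction n with
  | zero =>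
    obtain ⟨s, hs⟩ := ht.1
    exact (hr s).trans_lt hs
  | succ n ih => exact (greedySeq_succ_mem (ht.nonempty_Ioi_inter_Iio ih)).2

theorem strictMono_greedySeq_of_isLimitPt (hr : ∀ x, r ≤ x) {t : T} (ht : IsLimitPt t) :
    StrictMono (greedySeq c r (Set.Iio t)) :=
  strictMono_nat_of_lt_succ fun n =>
    (greedySeq_succ_mem (ht.nonempty_Ioi_inter_Iio (greedySeq_lt_of_isLimitPt hr ht n))).1

theorem exists_le_greedySeq_of_isLimitPt (hchain : ∀ t : T, IsChain (· ≤ ·) (Set.Iic t))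
    {t s : T} (hc : Set.InjOn c (Set.Iio t)) (hr : ∀ x, r ≤ x) (ht : IsLimitPt t)
    (hs : s < t) : ∃ n, s ≤ greedySeq c r (Set.Iio t) n := by
  by_contra! hnot
  have hmem : ∀ n, s ∈ Set.Ioi (greedySeq c r (Set.Iio t) n) ∩ Set.Iio t := fun n =>
    ⟨lt_of_le_not_ge (((hchain t).total (greedySeq_lt_of_isLimitPt hr ht n).le hs.le)
      |>.resolve_right (hnot n)) (hnot n), hs⟩
  have hlow := le_color_greedySeq_succ hc (n := c s + 1) fun m _ => ⟨s, hmem m⟩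
  have hhigh := color_greedySeq_succ_le (hmem (c s + 1))
  omega

theorem le_color_of_greedySeq_Iic_lt {t : T} (hc : Set.InjOn c (Set.Iic t)) {n : ℕ}
    (hn : greedySeq c r (Set.Iic t) n < t) : n ≤ c t :=
  have ht : ∀ m ≤ n, t ∈ Set.Ioi (greedySeq c r (Set.Iic t) m) ∩ Set.Iic t :=
    fun _ hm => ⟨(monotone_greedySeq hm).trans_lt hn, le_rfl⟩
  (le_color_greedySeq_succ hc fun m hm => ⟨t, ht m hm⟩).trans
    (color_greedySeq_succ_le (ht n le_rfl))

theorem exists_finset_greedySeq_mem (hc : ∀ u, Set.InjOn c (Set.Iic u)) (t : T) :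
    ∃ St : Finset T, (∀ s ∈ St, s < t) ∧ ∀ t' : T, t < t' →
      ∀ n : ℕ, greedySeq c r (Set.Iio t') n < t → greedySeq c r (Set.Iio t') n ∈ St := by
  classical
  refine ⟨((Finset.range (c t + 1)).image (greedySeq c r (Set.Iic t))).filter (· < t),
    fun s hs => (Finset.mem_filter.mp hs).2, fun t' htt' n hn => ?_⟩
  have heq : greedySeq c r (Set.Iic t) n = greedySeq c r (Set.Iio t') n :=
    greedySeq_eq_of_subset (Set.Iic_subset_Iio.mpr htt') (isLowerSet_Iic t)
      ((hc t').mono Set.Iio_subset_Iic_self) hn.le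
  have hle := le_color_of_greedySeq_Iic_lt (hc t) (heq ▸ hn)
  exact Finset.mem_filter.mpr
    ⟨Finset.mem_image.mpr ⟨n, Finset.mem_range.mpr (Nat.lt_succ_of_le hle), heq⟩, hn⟩

end Tree

theorem stmt_14_general {T : Type u} [PartialOrder T]
    -- order tree: least element, down-sets are chains, and < is well-founded
    -- (so every down-set ⌈t⌉ is well-ordered)
    (root : T) (hroot : ∀ t, root ≤ t)
    (hchain : ∀ t : T, IsChain (· ≤ ·) (Set.Iic t))
    -- an antichain partition
    (U : ℕ → Set T) (hanti : ∀ n, IsAntichain (· ≤ ·) (U n))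
    (hpart : ∀ t : T, ∃! n, t ∈ U n) :
    ∃ seq : T → ℕ → T,
      -- at each limit point, `seq t` is an increasing cofinal ω-sequence below t
      (∀ t : T, IsLimitPt t →
        StrictMono (seq t) ∧ (∀ n, seq t n < t) ∧ ∀ s, s < t → ∃ n, s ≤ seq t n) ∧
      -- property (⋆)
      (∀ t : T, ∃ St : Finset T, (∀ s ∈ St, s < t) ∧
        ∀ t' : T, t < t' → IsLimitPt t' →
          ∀ n : ℕ, seq t' n < t → seq t' n ∈ St) := by
  choose c hcU using fun t => (hpart t).exists
  have hc : ∀ u, Set.InjOn c (Set.Iic u) := fun u => injOn_of_isAntichain hanti hcU (hchain u)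
  refine ⟨fun t => greedySeq c root (Set.Iio t), fun t ht => ⟨?_, ?_, ?_⟩, fun t => ?_⟩
  · exact strictMono_greedySeq_of_isLimitPt hroot ht
  · exact greedySeq_lt_of_isLimitPt hroot ht
  · exact fun s hs => exists_le_greedySeq_of_isLimitPt hchain
      ((hc t).mono Set.Iio_subset_Iic_self) hroot ht hs
  · obtain ⟨St, hSt, hmem⟩ := exists_finset_greedySeq_mem (r := root) hc t
    exact ⟨St, hSt, fun t' htt' _ => hmem t' htt'⟩

theorem stmt_14 {T : Type u} [PartialOrder T]
    -- order tree: least element, down-sets are chains, and < is well-founded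
    -- (so every down-set ⌈t⌉ is well-ordered)
    (root : T) (hroot : ∀ t, root ≤ t)
    (hchain : ∀ t : T, IsChain (· ≤ ·) (Set.Iic t))
    [WellFoundedLT T]
    -- Aronszajn: size ℵ₁, countable branches (maximal chains), countable levels
    (hsize : #T = Cardinal.aleph 1)
    (hbranch : ∀ C : Set T, IsMaxChain (· ≤ ·) C → C.Countable)
    (hlevel : ∀ o : Ordinal.{u},
      {t : T | IsWellFounded.rank (α := T) (· < ·) t = o}.Countable)
    -- an antichain partition
    (U : ℕ → Set T) (hanti : ∀ n, IsAntichain (· ≤ ·) (U n))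
    (hpart : ∀ t : T, ∃! n, t ∈ U n) :
    ∃ seq : T → ℕ → T,
      -- at each limit point, `seq t` is an increasing cofinal ω-sequence below t
      (∀ t : T, IsLimitPt t →
        StrictMono (seq t) ∧ (∀ n, seq t n < t) ∧ ∀ s, s < t → ∃ n, s ≤ seq t n) ∧
      -- property (⋆)
      (∀ t : T, ∃ St : Finset T, (∀ s ∈ St, s < t) ∧
        ∀ t' : T, t < t' → IsLimitPt t' →
          ∀ n : ℕ, seq t' n < t → seq t' n ∈ St) :=
  stmt_14_general root hroot hchain U hanti hpart
end

section
/- Let G be a sparse T-graph for an order tree T of height at most ω₁, and let H = G ♯ ℕ be its ray inflation. Then for every ordinal i < ω₁, the map sending t ∈ T^i (the i-th level of T) to the induced subgraph H[⌊t⌋ × ℕ] is a bijection between T^i and the set of connected components of H − (T^{<i} × ℕ). -/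
open Cardinal

/-- One direction of adjacency in the ray inflation `G ♯ ℕ` of a sparse `T`-graph
determined by the ladder system `ladder`: `q` is a "lower" neighbour of `p`.
The three clauses are: horizontal ray edges; successor edges to the predecessor;
limit edges `(t,n)(t_n,n)` along the chosen cofinal sequence. -/
def InflAdj {T : Type u} [PartialOrder T] (ladder : T → ℕ → T) (p q : T × ℕ) : Prop :=
  (q.1 = p.1 ∧ q.2 = p.2 + 1) ∨
  (q.2 = p.2 ∧ q.1 ⋖ p.1) ∨
  (IsLimitPt p.1 ∧ q = (ladder p.1 p.2, p.2))

/-- The height (rank) of a node of an order tree. -/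
noncomputable def rk {T : Type u} [PartialOrder T] [WellFoundedLT T] (t : T) : Ordinal.{u} :=
  IsWellFounded.rank (α := T) (· < ·) t

/-! The level-`i` node `t` below a vertex is an invariant of paths avoiding `T^{<i} × ℕ`: every
edge of `G ♯ ℕ` joins comparable nodes, and in a tree a node comparable with one above `t` but of
rank at least `i` is itself above `t`. Conversely, from any `(s, n)` with `t ≤ s` one descends
towards `t`: at a successor along the vertical edge, at a limit by first walking along the ray to
a height `n'` at which the ladder point `ladder s n'` is already above `t`. -/

theorem SimpleGraph.reachable_of_forall_adj_succ {V : Type*} {G : SimpleGraph V} {f : ℕ → V}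
    (h : ∀ n, G.Adj (f n) (f (n + 1))) (m n : ℕ) : G.Reachable (f m) (f n) := by
  wlog hmn : m ≤ n generalizing m n
  · exact (this n m (le_of_not_ge hmn)).symm
  induction n, hmn using Nat.le_induction with
  | base => rfl
  | succ n _ ih => exact ih.trans (h n).reachable

section Tree

variable {T : Type u} [PartialOrder T]

theorem le_of_lt_of_covBy_of_isChain {s s' t : T} (hs : IsChain (· ≤ ·) (Set.Iic s))
    (hcov : s' ⋖ s) (hts : t < s) : t ≤ s' := by
  rcases hs.total hts.le hcov.le with h | h
  · exact h
  · rcases h.lt_or_eq with h | rfl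
    · exact (hcov.2 h hts).elim
    · exact le_rfl

variable [WellFoundedLT T]

theorem rk_strictMono : StrictMono (rk (T := T)) :=
  WellFoundedLT.rank_strictMono

theorem exists_le_rk_eq {i : Ordinal.{u}} (u : T) (hi : i ≤ rk u) : ∃ s ≤ u, rk s = i := by
  induction u using WellFoundedLT.induction with
  | ind u ih =>
    rcases hi.lt_or_eq with hlt | heq
    · rw [rk, IsWellFounded.rank_eq, Ordinal.lt_iSup_iff] at hlt
      obtain ⟨⟨b, hb⟩, hib⟩ := hlt
      obtain ⟨s, hsb, hs⟩ := ih b hb (Order.lt_succ_iff.mp hib)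
      exact ⟨s, hsb.trans hb.le, hs⟩
    · exact ⟨u, le_rfl, heq.symm⟩

theorem le_of_le_of_rk_le {a b s : T} (ha : IsChain (· ≤ ·) (Set.Iic a)) (hsa : s ≤ a)
    (hba : b ≤ a) (h : rk s ≤ rk b) : s ≤ b := by
  rcases ha.total hsa hba with hsb | hbs
  · exact hsb
  · rcases hbs.lt_or_eq with hbs | rfl
    · exact absurd h (rk_strictMono hbs).not_ge
    · exact le_rfl

end Tree

section RayInflation

variable {T : Type u} [PartialOrder T] {ladder : T → ℕ → T} {H : SimpleGraph (T × ℕ)}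

theorem InflAdj.fst_le (hladder : ∀ t, IsLimitPt t → ∀ n, ladder t n < t)
    {p q : T × ℕ} (h : InflAdj ladder p q) : q.1 ≤ p.1 := by
  rcases h with ⟨h, -⟩ | ⟨-, h⟩ | ⟨hlim, rfl⟩
  · exact h.le
  · exact h.le
  · exact (hladder _ hlim _).le

theorem fst_le_or_le_of_adj (hladder : ∀ t, IsLimitPt t → ∀ n, ladder t n < t)
    (hH : ∀ p q : T × ℕ, H.Adj p q ↔ InflAdj ladder p q ∨ InflAdj ladder q p)
    {a b : T × ℕ} (hab : H.Adj a b) : b.1 ≤ a.1 ∨ a.1 ≤ b.1 :=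
  ((hH a b).mp hab).imp (InflAdj.fst_le hladder) (InflAdj.fst_le hladder)

theorem exists_adj_of_lt (hladder : ∀ t : T, IsLimitPt t →
      StrictMono (ladder t) ∧ (∀ n, ladder t n < t) ∧ ∀ s, s < t → ∃ n, s ≤ ladder t n)
    (hH : ∀ p q : T × ℕ, H.Adj p q ↔ InflAdj ladder p q ∨ InflAdj ladder q p)
    {s t : T} (hs : IsChain (· ≤ ·) (Set.Iic s)) (hts : t < s) (n : ℕ) :
    ∃ n', ∃ s' < s, t ≤ s' ∧ H.Adj (s, n') (s', n') := by
  by_cases hsucc : ∃ s', s' ⋖ s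
  · obtain ⟨s', hcov⟩ := hsucc
    exact ⟨n, s', hcov.lt, le_of_lt_of_covBy_of_isChain hs hcov hts,
      (hH _ _).mpr (Or.inl (Or.inr (Or.inl ⟨rfl, hcov⟩)))⟩
  · have hlim : IsLimitPt s := ⟨⟨t, hts⟩, hsucc⟩
    obtain ⟨hmono, hlt, hcof⟩ := hladder s hlim
    obtain ⟨m, hm⟩ := hcof t hts
    exact ⟨max n m, ladder s (max n m), hlt _,
      hm.trans (hmono.monotone (le_max_right n m)),
      (hH _ _).mpr (Or.inl (Or.inr (Or.inr ⟨hlim, rfl⟩)))⟩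

variable [WellFoundedLT T] {i : Ordinal.{u}}

theorem reachable_induce_along_ray
    (hH : ∀ p q : T × ℕ, H.Adj p q ↔ InflAdj ladder p q ∨ InflAdj ladder q p)
    {s : T} (hs : i ≤ rk s) (n m : ℕ) :
    (H.induce {p : T × ℕ | i ≤ rk p.1}).Reachable ⟨(s, n), hs⟩ ⟨(s, m), hs⟩ :=
  SimpleGraph.reachable_of_forall_adj_succ
    (f := fun k : ℕ => (⟨(s, k), hs⟩ : {p : T × ℕ | i ≤ rk p.1}))
    (fun k => show H.Adj (s, k) (s, k + 1) from (hH _ _).mpr (Or.inl (Or.inl ⟨rfl, rfl⟩)))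
    n m

theorem reachable_induce_of_le_fst (hladder : ∀ t : T, IsLimitPt t →
      StrictMono (ladder t) ∧ (∀ n, ladder t n < t) ∧ ∀ s, s < t → ∃ n, s ≤ ladder t n)
    (hH : ∀ p q : T × ℕ, H.Adj p q ↔ InflAdj ladder p q ∨ InflAdj ladder q p)
    (hchain : ∀ t : T, IsChain (· ≤ ·) (Set.Iic t)) {t : T} (ht : i ≤ rk t)
    (q : {p : T × ℕ | i ≤ rk p.1}) (htq : t ≤ q.1.1) :
    (H.induce {p : T × ℕ | i ≤ rk p.1}).Reachable q ⟨(t, 0), ht⟩ := by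
  obtain ⟨⟨s, n⟩, hs⟩ := q
  induction s using WellFoundedLT.induction generalizing n with
  | ind s ih =>
    rcases htq.lt_or_eq with hts | rfl
    · obtain ⟨n', s', hs's, hts', hadj⟩ := exists_adj_of_lt hladder hH (hchain s) hts n
      have hs' : i ≤ rk s' := ht.trans (rk_strictMono.monotone hts')
      exact (reachable_induce_along_ray hH hs n n').trans
        ((show (H.induce {p : T × ℕ | i ≤ rk p.1}).Adj ⟨(s, n'), hs⟩ ⟨(s', n'), hs'⟩ from
          hadj).reachable.trans (ih s' hs's n' hs' hts'))
    · exact reachable_induce_along_ray hH hs n 0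

theorem le_fst_of_reachable_induce (hladder : ∀ t, IsLimitPt t → ∀ n, ladder t n < t)
    (hH : ∀ p q : T × ℕ, H.Adj p q ↔ InflAdj ladder p q ∨ InflAdj ladder q p)
    (hchain : ∀ t : T, IsChain (· ≤ ·) (Set.Iic t)) {t : T} (ht : rk t ≤ i)
    {p q : {p : T × ℕ | i ≤ rk p.1}}
    (hpq : (H.induce {p : T × ℕ | i ≤ rk p.1}).Reachable p q) (htp : t ≤ p.1.1) :
    t ≤ q.1.1 := by
  obtain ⟨w⟩ := hpq
  induction w with
  | nil => exact htp
  | @cons a b _ hab _ ih =>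
    refine ih ?_
    rcases fst_le_or_le_of_adj hladder hH (show H.Adj a.1 b.1 from hab) with hba | hab
    · exact le_of_le_of_rk_le (hchain _) htp hba (ht.trans b.2)
    · exact htp.trans hab

theorem reachable_induce_iff_le_fst (hladder : ∀ t : T, IsLimitPt t →
      StrictMono (ladder t) ∧ (∀ n, ladder t n < t) ∧ ∀ s, s < t → ∃ n, s ≤ ladder t n)
    (hH : ∀ p q : T × ℕ, H.Adj p q ↔ InflAdj ladder p q ∨ InflAdj ladder q p)
    (hchain : ∀ t : T, IsChain (· ≤ ·) (Set.Iic t)) {t : T} (ht : rk t = i)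
    (q : {p : T × ℕ | i ≤ rk p.1}) :
    (H.induce {p : T × ℕ | i ≤ rk p.1}).Reachable q ⟨(t, 0), ht.ge⟩ ↔ t ≤ q.1.1 :=
  ⟨fun h => le_fst_of_reachable_induce (fun t ht => (hladder t ht).2.1) hH hchain ht.le
      h.symm le_rfl,
    reachable_induce_of_le_fst hladder hH hchain ht.ge q⟩

end RayInflation

theorem stmt_15_general {T : Type u} [PartialOrder T]
    -- order tree with well-ordered down-sets
    (hchain : ∀ t : T, IsChain (· ≤ ·) (Set.Iic t))
    [WellFoundedLT T]
    -- ladder system: the down-neighbourhoods of a sparse T-graph at limits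
    (ladder : T → ℕ → T)
    (hladder : ∀ t : T, IsLimitPt t →
      StrictMono (ladder t) ∧ (∀ n, ladder t n < t) ∧ ∀ s, s < t → ∃ n, s ≤ ladder t n)
    -- H is the ray inflation G ♯ ℕ
    (H : SimpleGraph (T × ℕ))
    (hH : ∀ p q : T × ℕ, H.Adj p q ↔ InflAdj ladder p q ∨ InflAdj ladder q p) :
    ∀ i : Ordinal.{u}, i < (Cardinal.aleph 1).ord →
      -- the map t ↦ H[⌊t⌋ × ℕ] is a bijection between the i-th level T^i and
      -- the components of H − (T^{<i} × ℕ) ...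
      Function.Bijective
        (fun t : {t : T // rk t = i} =>
          (H.induce {p : T × ℕ | i ≤ rk p.1}).connectedComponentMk
            ⟨(t.1, 0), le_of_eq t.2.symm⟩) ∧
      -- ... and the component of t indeed has vertex set ⌊t⌋ × ℕ
      ∀ t : {t : T // rk t = i},
        ((H.induce {p : T × ℕ | i ≤ rk p.1}).connectedComponentMk
            ⟨(t.1, 0), le_of_eq t.2.symm⟩).supp =
          {q : {p : T × ℕ | i ≤ rk p.1} | t.1 ≤ (q : T × ℕ).1} := by
  intro i _
  have hreach (t : {t : T // rk t = i}) := reachable_induce_iff_le_fst hladder hH hchain t.2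
  refine ⟨⟨fun t t' htt' => ?_, fun c => ?_⟩, fun t => ?_⟩
  · have h := SimpleGraph.ConnectedComponent.eq.mp htt'
    exact Subtype.ext (le_antisymm ((hreach t _).mp h.symm) ((hreach t' _).mp h))
  · induction c using SimpleGraph.ConnectedComponent.ind with
    | h q =>
      obtain ⟨s, hsq, hs⟩ := exists_le_rk_eq q.1.1 q.2
      exact ⟨⟨s, hs⟩,
        SimpleGraph.ConnectedComponent.eq.mpr ((hreach ⟨s, hs⟩ q).mpr hsq).symm⟩
  · ext q
    exact SimpleGraph.ConnectedComponent.eq.trans (hreach t q)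

theorem stmt_15 {T : Type u} [PartialOrder T]
    -- order tree with well-ordered down-sets
    (root : T) (hroot : ∀ t, root ≤ t)
    (hchain : ∀ t : T, IsChain (· ≤ ·) (Set.Iic t))
    [WellFoundedLT T]
    -- of height at most ω₁
    (hheight : ∀ t : T, rk t < (Cardinal.aleph 1).ord)
    -- ladder system: the down-neighbourhoods of a sparse T-graph at limits
    (ladder : T → ℕ → T)
    (hladder : ∀ t : T, IsLimitPt t →
      StrictMono (ladder t) ∧ (∀ n, ladder t n < t) ∧ ∀ s, s < t → ∃ n, s ≤ ladder t n)
    -- H is the ray inflation G ♯ ℕ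
    (H : SimpleGraph (T × ℕ))
    (hH : ∀ p q : T × ℕ, H.Adj p q ↔ InflAdj ladder p q ∨ InflAdj ladder q p) :
    ∀ i : Ordinal.{u}, i < (Cardinal.aleph 1).ord →
      -- the map t ↦ H[⌊t⌋ × ℕ] is a bijection between the i-th level T^i and
      -- the components of H − (T^{<i} × ℕ) ...
      Function.Bijective
        (fun t : {t : T // rk t = i} =>
          (H.induce {p : T × ℕ | i ≤ rk p.1}).connectedComponentMk
            ⟨(t.1, 0), le_of_eq t.2.symm⟩) ∧
      -- ... and the component of t indeed has vertex set ⌊t⌋ × ℕ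
      ∀ t : {t : T // rk t = i},
        ((H.induce {p : T × ℕ | i ≤ rk p.1}).connectedComponentMk
            ⟨(t.1, 0), le_of_eq t.2.symm⟩).supp =
          {q : {p : T × ℕ | i ≤ rk p.1} | t.1 ≤ (q : T × ℕ).1} :=
  stmt_15_general hchain ladder hladder H hH
end

section
/- Let G be a sparse T-graph for an order tree T of height at most ω₁, and H = G ♯ ℕ its ray inflation. Then all the horizontal rays R_t = H[{t} × ℕ] (t ∈ T) belong to one and the same end of H, and H has only this one end; in particular that end has degree |T| (it contains |T| many pairwise disjoint rays). -/
open Cardinal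

/-- A ray in a graph: a one-way infinite path, given by an injective sequence of
successively adjacent vertices. -/
def IsRay {V : Type u} (G : SimpleGraph V) (R : ℕ → V) : Prop :=
  Function.Injective R ∧ ∀ n, G.Adj (R n) (R (n + 1))

/-- Two rays are equivalent (belong to the same end) if there are infinitely many
pairwise vertex-disjoint paths between them. -/
def RayEquiv {V : Type u} (G : SimpleGraph V) (R₁ R₂ : ℕ → V) : Prop :=
  ∃ (a b : ℕ → V) (w : ∀ n, G.Walk (a n) (b n)),
    (∀ n, (w n).IsPath) ∧
    (∀ n, a n ∈ Set.range R₁) ∧ (∀ n, b n ∈ Set.range R₂) ∧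
    ∀ m n, m ≠ n → ∀ x ∈ (w m).support, x ∉ (w n).support

/-!
Every vertex `(t, n)` reaches `(root, n)` inside level `n` by descending along predecessor and
ladder edges, which terminates because `T` is well-founded. These level paths are disjoint for
distinct levels, so they join any two horizontal rays, and also join to `R_root` any ray that
climbs unboundedly (such a ray meets every level above its start, as levels change by at most one
along an edge). A ray confined to finitely many levels meets some level `n` in infinitely many
nodes; choosing them as `f 0, f 1, …` with no `f k` below an earlier `f j`, the paths that climb
from `(f k, n)` to level `n + k + 1` and then descend to the root are pairwise disjoint.
For the degree: if `T` is finite, disjoint rays cross a common level at distinct nodes;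
if `T` is infinite, `|T × ℕ| = |T|`.
-/

open SimpleGraph

theorem Nat.exists_eq_of_le_succ_of_le {u : ℕ → ℕ} (hu : ∀ m, u (m + 1) ≤ u m + 1) {N M : ℕ}
    (h0 : u 0 ≤ N) (hM : N ≤ u M) : ∃ m, u m = N := by
  induction M with
  | zero => exact ⟨0, le_antisymm h0 hM⟩
  | succ M ih =>
    by_cases hN : N ≤ u M
    · exact ih hN
    · exact ⟨M + 1, by have := hu M; omega⟩

theorem exists_seq_not_le_of_infinite {T : Type*} [PartialOrder T] [WellFoundedLT T]
    {S : Set T} (hS : S.Infinite) :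
    ∃ f : ℕ → T, (∀ k, f k ∈ S) ∧ ∀ j k, j < k → ¬ f k ≤ f j := by
  have wf : WellFounded ((· < ·) : T → T → Prop) := wellFounded_lt
  let peel : {s : Set T // s.Infinite} → {s : Set T // s.Infinite} := fun s =>
    ⟨s.1 \ {wf.min s.1 s.2.nonempty}, s.2.sdiff (Set.finite_singleton _)⟩
  let A : ℕ → {s : Set T // s.Infinite} := fun k => peel^[k] ⟨S, hS⟩
  let f : ℕ → T := fun k => wf.min (A k).1 (A k).2.nonempty
  have hf : ∀ k, f k ∈ (A k).1 := fun k => wf.min_mem _ _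
  have hA_succ : ∀ k, (A (k + 1)).1 = (A k).1 \ {f k} := fun k =>
    congrArg Subtype.val (Function.iterate_succ_apply' peel k _)
  have hA : Antitone fun k => (A k).1 :=
    antitone_nat_of_succ_le fun k => (hA_succ k).trans_subset Set.sdiff_subset
  refine ⟨f, fun k => hA k.zero_le (hf k), fun j k hjk hle => ?_⟩
  have hk : f k ∈ (A (j + 1)).1 := hA hjk (hf k)
  rw [hA_succ, Set.mem_sdiff, Set.mem_singleton_iff] at hk
  exact wf.not_lt_min _ hk.1 (lt_of_le_of_ne hle hk.2)

theorem rayEquiv_of_walks {V : Type*} {G : SimpleGraph V} {R₁ R₂ a b : ℕ → V}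
    (w : ∀ n, G.Walk (a n) (b n)) (ha : ∀ n, a n ∈ Set.range R₁) (hb : ∀ n, b n ∈ Set.range R₂)
    (hdisj : ∀ m n, m ≠ n → ∀ x ∈ (w m).support, x ∉ (w n).support) : RayEquiv G R₁ R₂ := by
  classical
  exact ⟨a, b, fun n => (w n).bypass, fun n => (w n).bypass_isPath, ha, hb, fun m n hmn x hm hn =>
    hdisj m n hmn x ((w m).support_bypass_subset_support hm)
      ((w n).support_bypass_subset_support hn)⟩

theorem rayEquiv_of_walks_of_level {V : Type*} {G : SimpleGraph V} {R₁ R₂ a b : ℕ → V}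
    (w : ∀ n, G.Walk (a n) (b n)) (ha : ∀ n, a n ∈ Set.range R₁) (hb : ∀ n, b n ∈ Set.range R₂)
    (ℓ : V → ℕ) {g : ℕ → ℕ} (hg : Function.Injective g)
    (hlevel : ∀ n, ∀ x ∈ (w n).support, ℓ x = g n) : RayEquiv G R₁ R₂ :=
  rayEquiv_of_walks w ha hb fun m n hmn x hm hn =>
    hmn (hg ((hlevel m x hm).symm.trans (hlevel n x hn)))

def IsRayInflation {T : Type*} [PartialOrder T] (ladder : T → ℕ → T)
    (H : SimpleGraph (T × ℕ)) : Prop :=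
  ∀ p q : T × ℕ, H.Adj p q ↔ InflAdj ladder p q ∨ InflAdj ladder q p

namespace IsRayInflation

variable {T : Type u} [PartialOrder T] {ladder : T → ℕ → T} {H : SimpleGraph (T × ℕ)}

theorem adj_succ (hH : IsRayInflation ladder H) (t : T) (n : ℕ) : H.Adj (t, n) (t, n + 1) :=
  (hH _ _).2 (Or.inl (Or.inl ⟨rfl, rfl⟩))

theorem snd_le_succ (hH : IsRayInflation ladder H) {p q : T × ℕ} (h : H.Adj p q) :
    q.2 ≤ p.2 + 1 := by
  rcases (hH p q).1 h with h | h <;> rcases h with ⟨-, h⟩ | ⟨h, -⟩ | ⟨-, rfl⟩ <;> simp only [h] <;> omega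

theorem isRay_horizontal (hH : IsRayInflation ladder H) (t : T) : IsRay H fun n => (t, n) :=
  ⟨fun _ _ h => congrArg Prod.snd h, hH.adj_succ t⟩

theorem exists_adj_lt (hH : IsRayInflation ladder H)
    (hladder : ∀ t, IsLimitPt t → ∀ n, ladder t n < t) {s t : T} (hst : s < t) (n : ℕ) :
    ∃ t' < t, H.Adj (t, n) (t', n) := by
  by_cases hcov : ∃ t', t' ⋖ t
  · obtain ⟨t', ht'⟩ := hcov
    exact ⟨t', ht'.lt, (hH _ _).2 (Or.inl (Or.inr (Or.inl ⟨rfl, ht'⟩)))⟩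
  · have hlim : IsLimitPt t := ⟨⟨s, hst⟩, hcov⟩
    exact ⟨ladder t n, hladder t hlim n, (hH _ _).2 (Or.inl (Or.inr (Or.inr ⟨hlim, rfl⟩)))⟩

theorem exists_walk_root [WellFoundedLT T] (hH : IsRayInflation ladder H)
    (hladder : ∀ t, IsLimitPt t → ∀ n, ladder t n < t) {root : T} (hroot : ∀ t, root ≤ t)
    (p : T × ℕ) : ∃ w : H.Walk p (root, p.2), ∀ x ∈ w.support, x.1 ≤ p.1 ∧ x.2 = p.2 := by
  obtain ⟨t, n⟩ := p
  induction t using WellFoundedLT.induction with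
  | _ t ih =>
    rcases (hroot t).eq_or_lt with rfl | hlt
    · exact ⟨Walk.nil, by simp⟩
    obtain ⟨t', ht't, hadj⟩ := hH.exists_adj_lt hladder hlt n
    obtain ⟨w, hw⟩ := ih t' ht't
    refine ⟨Walk.cons hadj w, fun x hx => ?_⟩
    rw [Walk.support_cons, List.mem_cons] at hx
    rcases hx with rfl | hx
    · exact ⟨le_rfl, rfl⟩
    · exact ⟨(hw x hx).1.trans ht't.le, (hw x hx).2⟩

theorem exists_walk_vertical (hH : IsRayInflation ladder H) (t : T) (n d : ℕ) :
    ∃ w : H.Walk (t, n) (t, n + d), ∀ x ∈ w.support, x.1 = t ∧ x.2 ≤ n + d := by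
  induction d with
  | zero => exact ⟨Walk.nil, by simp⟩
  | succ d ih =>
    obtain ⟨w, hw⟩ := ih
    refine ⟨w.concat (hH.adj_succ t (n + d)), fun x hx => ?_⟩
    rw [Walk.support_concat, List.mem_append, List.mem_singleton] at hx
    rcases hx with hx | rfl
    · exact ⟨(hw x hx).1, by have := (hw x hx).2; omega⟩
    · exact ⟨rfl, by simp only; omega⟩

theorem rayEquiv_horizontal [WellFoundedLT T] (hH : IsRayInflation ladder H)
    (hladder : ∀ t, IsLimitPt t → ∀ n, ladder t n < t) {root : T} (hroot : ∀ t, root ≤ t)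
    (t s : T) : RayEquiv H (fun n => (t, n)) (fun n => (s, n)) := by
  have W : ∀ n, ∃ w : H.Walk (t, n) (s, n), ∀ x ∈ w.support, x.2 = n := by
    intro n
    obtain ⟨w₁, h₁⟩ := hH.exists_walk_root hladder hroot (t, n)
    obtain ⟨w₂, h₂⟩ := hH.exists_walk_root hladder hroot (s, n)
    refine ⟨w₁.append w₂.reverse, fun x hx => ?_⟩
    rcases (Walk.mem_support_append_iff _ _).1 hx with hx | hx
    · exact (h₁ x hx).2
    · exact (h₂ x (by simpa using hx)).2
  choose w hw using W
  exact rayEquiv_of_walks_of_level w (fun n => ⟨n, rfl⟩) (fun n => ⟨n, rfl⟩) Prod.snd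
    Function.injective_id hw

theorem rayEquiv_root_of_unbounded [WellFoundedLT T] (hH : IsRayInflation ladder H)
    (hladder : ∀ t, IsLimitPt t → ∀ n, ladder t n < t) {root : T} (hroot : ∀ t, root ≤ t)
    {R : ℕ → T × ℕ} (hR : ∀ m, H.Adj (R m) (R (m + 1))) (hunb : ∀ N, ∃ m, N ≤ (R m).2) :
    RayEquiv H R fun n => (root, n) := by
  have hlevel : ∀ k, ∃ m, (R m).2 = (R 0).2 + k := fun k =>
    let ⟨_, hM⟩ := hunb ((R 0).2 + k)
    Nat.exists_eq_of_le_succ_of_le (fun m => hH.snd_le_succ (hR m)) (Nat.le_add_right _ _) hM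
  choose m hm using hlevel
  choose w hw using fun k => hH.exists_walk_root hladder hroot (R (m k))
  exact rayEquiv_of_walks_of_level w (fun k => ⟨m k, rfl⟩) (fun k => ⟨_, rfl⟩) Prod.snd
    (add_right_injective (R 0).2) fun k x hx => (hw k x hx).2.trans (hm k)

theorem rayEquiv_root_of_bounded [WellFoundedLT T] (hH : IsRayInflation ladder H)
    (hladder : ∀ t, IsLimitPt t → ∀ n, ladder t n < t) {root : T} (hroot : ∀ t, root ≤ t)
    {R : ℕ → T × ℕ} (hR : Function.Injective R) {N : ℕ} (hN : ∀ m, (R m).2 < N) :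
    RayEquiv H R fun n => (root, n) := by
  obtain ⟨n, hn⟩ : ∃ n, {t | (t, n) ∈ Set.range R}.Infinite := by
    by_contra! hfin
    refine Set.infinite_range_of_injective hR <|
      ((Set.finite_Iio N).biUnion fun n _ => (hfin n).image fun t => (t, n)).subset ?_
    rintro _ ⟨m, rfl⟩
    exact Set.mem_biUnion (hN m) ⟨(R m).1, ⟨m, rfl⟩, rfl⟩
  obtain ⟨f, hfR, hf⟩ := exists_seq_not_le_of_infinite hn
  have W : ∀ k, ∃ w : H.Walk (f k, n) (root, n + (k + 1)), ∀ x ∈ w.support,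
      (x.1 = f k ∧ x.2 ≤ n + (k + 1)) ∨ (x.1 ≤ f k ∧ x.2 = n + (k + 1)) := by
    intro k
    obtain ⟨w₁, h₁⟩ := hH.exists_walk_vertical (f k) n (k + 1)
    obtain ⟨w₂, h₂⟩ := hH.exists_walk_root hladder hroot (f k, n + (k + 1))
    refine ⟨w₁.append w₂, fun x hx => ?_⟩
    rcases (Walk.mem_support_append_iff _ _).1 hx with hx | hx
    exacts [Or.inl (h₁ x hx), Or.inr (h₂ x hx)]
  choose w hw using W
  -- The later vertical part sits at the node `f k`, which avoids the earlier parts (at or below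
  -- `f j`) by the choice of `f`; all other crossings are ruled out by levels.
  have hdisj : ∀ j k, j < k → ∀ x ∈ (w j).support, x ∉ (w k).support := by
    intro j k hjk x hj hk
    have hkj := hf j k hjk
    rcases hw j x hj with ⟨e₁, e₂⟩ | ⟨e₁, e₂⟩ <;> rcases hw k x hk with ⟨d₁, d₂⟩ | ⟨d₁, d₂⟩
    · exact hkj (d₁ ▸ e₁ ▸ le_rfl)
    · omega
    · exact hkj (d₁ ▸ e₁)
    · omega
  refine rayEquiv_of_walks w hfR (fun k => ⟨_, rfl⟩) fun j k hjk => ?_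
  rcases hjk.lt_or_gt with h | h
  · exact hdisj j k h
  · exact fun x hj hk => hdisj k j h x hk hj

theorem rayEquiv_root [WellFoundedLT T] (hH : IsRayInflation ladder H)
    (hladder : ∀ t, IsLimitPt t → ∀ n, ladder t n < t) {root : T} (hroot : ∀ t, root ≤ t)
    {R : ℕ → T × ℕ} (hR : IsRay H R) : RayEquiv H R fun n => (root, n) := by
  by_cases hunb : ∀ N, ∃ m, N ≤ (R m).2
  · exact hH.rayEquiv_root_of_unbounded hladder hroot hR.2 hunb
  · obtain ⟨N, hN⟩ : ∃ N, ∀ m, (R m).2 < N := by simpa using hunb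
    exact hH.rayEquiv_root_of_bounded hladder hroot hR.1 hN

theorem card_le_of_disjoint_rays [Fintype T] (hH : IsRayInflation ladder H) {ι : Type*}
    {Rf : ι → ℕ → T × ℕ} (hray : ∀ i, IsRay H (Rf i))
    (hdisj : ∀ i j, i ≠ j → ∀ n m, Rf i n ≠ Rf j m) (s : Finset ι) :
    s.card ≤ Fintype.card T := by
  classical
  have hunb : ∀ i M, ∃ m, M ≤ (Rf i m).2 := by
    intro i M
    by_contra! h
    refine Set.infinite_range_of_injective (hray i).1 <|
      (Set.finite_univ.prod (Set.finite_Iio M)).subset ?_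
    rintro _ ⟨m, rfl⟩
    exact ⟨trivial, h m⟩
  set N := s.sup fun i => (Rf i 0).2
  have hhit : ∀ i ∈ s, ∃ m, (Rf i m).2 = N := fun i hi =>
    let ⟨_, hM⟩ := hunb i N
    Nat.exists_eq_of_le_succ_of_le (fun m => hH.snd_le_succ ((hray i).2 m))
      (Finset.le_sup (f := fun i => (Rf i 0).2) hi) hM
  choose! m hm using hhit
  refine Finset.card_univ (α := T) ▸ Finset.card_le_card_of_injOn (fun i => (Rf i (m i)).1)
    (fun _ _ => Finset.mem_univ _) fun i hi j hj hij => ?_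
  by_contra hne
  exact hdisj i j hne _ _ (Prod.ext hij ((hm i hi).trans (hm j hj).symm))

theorem mk_le_of_disjoint_rays (hH : IsRayInflation ladder H) {ι : Type u}
    {Rf : ι → ℕ → T × ℕ} (hray : ∀ i, IsRay H (Rf i))
    (hdisj : ∀ i j, i ≠ j → ∀ n m, Rf i n ≠ Rf j m) : #ι ≤ #T := by
  rcases finite_or_infinite T with hT | hT
  · have := Fintype.ofFinite T
    have hcard := hH.card_le_of_disjoint_rays hray hdisj
    have : Finite ι := by
      by_contra hι
      rw [not_finite_iff_infinite] at hι
      obtain ⟨s, hs⟩ := Infinite.exists_subset_card_eq ι (Fintype.card T + 1)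
      have := hcard s
      omega
    have := Fintype.ofFinite ι
    simpa [Cardinal.mk_fintype] using hcard Finset.univ
  · calc #ι ≤ #(T × ℕ) := mk_le_of_injective (f := fun i => Rf i 0) fun i j h =>
          by_contra fun hne => hdisj i j hne 0 0 h
      _ = #T := by simp

end IsRayInflation

theorem stmt_16_general {T : Type u} [PartialOrder T]
    (root : T) (hroot : ∀ t, root ≤ t)
    [WellFoundedLT T]
    (ladder : T → ℕ → T)
    (hladder : ∀ t : T, IsLimitPt t →
      StrictMono (ladder t) ∧ (∀ n, ladder t n < t) ∧ ∀ s, s < t → ∃ n, s ≤ ladder t n)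
    (H : SimpleGraph (T × ℕ))
    (hH : ∀ p q : T × ℕ, H.Adj p q ↔ InflAdj ladder p q ∨ InflAdj ladder q p) :
    -- the horizontal rays R_t are rays of H and pairwise disjoint ...
    (∀ t : T, IsRay H (fun n => (t, n))) ∧
    (∀ t s : T, t ≠ s → ∀ n m : ℕ, (t, n) ≠ (s, m)) ∧
    -- ... all equivalent to one another ...
    (∀ t s : T, RayEquiv H (fun n => (t, n)) (fun n => (s, n))) ∧
    -- ... H has only this one end ...
    (∀ R : ℕ → T × ℕ, IsRay H R → RayEquiv H R (fun n => (root, n))) ∧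
    -- ... and the end has degree |T|: no family of pairwise disjoint rays is larger
    (∀ (ι : Type u) (Rf : ι → ℕ → T × ℕ), (∀ i, IsRay H (Rf i)) →
      (∀ i j, i ≠ j → ∀ n m, Rf i n ≠ Rf j m) → #ι ≤ #T) := by
  have hH : IsRayInflation ladder H := hH
  have hlad : ∀ t, IsLimitPt t → ∀ n, ladder t n < t := fun t ht => (hladder t ht).2.1
  exact ⟨hH.isRay_horizontal, fun t s hts n m h => hts (congrArg Prod.fst h),
    hH.rayEquiv_horizontal hlad hroot, fun _ => hH.rayEquiv_root hlad hroot,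
    fun _ _ => hH.mk_le_of_disjoint_rays⟩

theorem stmt_16 {T : Type u} [PartialOrder T]
    (root : T) (hroot : ∀ t, root ≤ t)
    (hchain : ∀ t : T, IsChain (· ≤ ·) (Set.Iic t))
    [WellFoundedLT T]
    (hheight : ∀ t : T, rk t < (Cardinal.aleph 1).ord)
    (ladder : T → ℕ → T)
    (hladder : ∀ t : T, IsLimitPt t →
      StrictMono (ladder t) ∧ (∀ n, ladder t n < t) ∧ ∀ s, s < t → ∃ n, s ≤ ladder t n)
    (H : SimpleGraph (T × ℕ))
    (hH : ∀ p q : T × ℕ, H.Adj p q ↔ InflAdj ladder p q ∨ InflAdj ladder q p) :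
    -- the horizontal rays R_t are rays of H and pairwise disjoint ...
    (∀ t : T, IsRay H (fun n => (t, n))) ∧
    (∀ t s : T, t ≠ s → ∀ n m : ℕ, (t, n) ≠ (s, m)) ∧
    -- ... all equivalent to one another ...
    (∀ t s : T, RayEquiv H (fun n => (t, n)) (fun n => (s, n))) ∧
    -- ... H has only this one end ...
    (∀ R : ℕ → T × ℕ, IsRay H R → RayEquiv H R (fun n => (root, n))) ∧
    -- ... and the end has degree |T|: no family of pairwise disjoint rays is larger
    (∀ (ι : Type u) (Rf : ι → ℕ → T × ℕ), (∀ i, IsRay H (Rf i)) →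
      (∀ i j, i ≠ j → ∀ n m, Rf i n ≠ Rf j m) → #ι ≤ #T) :=
  stmt_16_general root hroot ladder hladder H hH
end

section
/- Let T be an Aronszajn tree and G a T-graph satisfying property (⋆): for every t ∈ T there is a finite S_t ⊆ {t' : t' < t} such that every t'' > t has all of its down-neighbours below t inside S_t. Then the ray inflation H = G ♯ ℕ satisfies (⋆⋆): for every t ∈ T there is a finite S_t ⊆ {t' : t' < t} such that every vertex (t'', n) of H with t'' > t and n ∈ ℕ has N_H((t'',n)) ∩ ({t' : t' < t} × ℕ) ⊆ S_t × |S_t|. -/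
open Cardinal

/-! Every edge of `G ♯ ℕ` leaving a vertex `(t'', n)` downwards across a node `t < t''` must be a
ladder edge `(t'', n) — (ladder t'' n, n)`: the vertical edges stay at `t''`, the predecessor
edge cannot jump over `t`, and upward edges do not go down at all. Since the ladder is strictly
increasing, `ladder t'' 0 < ⋯ < ladder t'' n < t` all lie in the finite set `S_t` given by (⋆),
so `n < |S_t|`. -/

theorem Function.Injective.lt_card_of_forall_le_mem {α : Type*} {f : ℕ → α}
    (hf : f.Injective) {s : Finset α} {n : ℕ} (h : ∀ k ≤ n, f k ∈ s) : n < s.card := by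
  simpa using Finset.card_le_card_of_injOn f (s := Finset.range (n + 1))
    (fun k hk => h k (Nat.lt_succ_iff.mp (by simpa using hk))) hf.injOn

namespace InflAdj

variable {T : Type*} [PartialOrder T] {ladder : T → ℕ → T} {p q : T × ℕ}

theorem fst_le_s17 (hladder : ∀ t, IsLimitPt t → ∀ n, ladder t n < t) (h : InflAdj ladder p q) :
    q.1 ≤ p.1 := by
  rcases h with ⟨h, -⟩ | ⟨-, h⟩ | ⟨hlim, rfl⟩
  · exact h.le
  · exact h.le
  · exact (hladder p.1 hlim p.2).le

theorem eq_ladder_of_lt_of_lt {t : T} (h : InflAdj ladder p q) (hq : q.1 < t) (hp : t < p.1) :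
    IsLimitPt p.1 ∧ q = (ladder p.1 p.2, p.2) := by
  rcases h with ⟨h, -⟩ | ⟨-, h⟩ | h
  · exact absurd (h ▸ hq) (lt_asymm hp)
  · exact absurd hp (h.2 hq)
  · exact h

end InflAdj

theorem stmt_17_general {T : Type u} [PartialOrder T]
    -- G is a sparse T-graph: edges only between comparable nodes, lower
    -- neighbourhoods cofinal, at limits given exactly by the ladder system
    (G : SimpleGraph T) (ladder : T → ℕ → T)
    (hGladder : ∀ t : T, IsLimitPt t →
      StrictMono (ladder t) ∧ (∀ n, G.Adj (ladder t n) t ∧ ladder t n < t) ∧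
      ∀ s : T, G.Adj s t → s < t → ∃ n, s = ladder t n)
    -- property (⋆)
    (hstar : ∀ t : T, ∃ St : Finset T, (∀ s ∈ St, s < t) ∧
      ∀ t'' : T, t < t'' → ∀ s : T, G.Adj s t'' → s < t'' → s < t → s ∈ St)
    -- H is the ray inflation G ♯ ℕ
    (H : SimpleGraph (T × ℕ))
    (hH : ∀ p q : T × ℕ, H.Adj p q ↔ InflAdj ladder p q ∨ InflAdj ladder q p) :
    -- property (⋆⋆) : N_H((t'',n)) ∩ ({t' < t} × ℕ) ⊆ S_t × |S_t|
    ∀ t : T, ∃ St : Finset T, (∀ s ∈ St, s < t) ∧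
      ∀ t'' : T, t < t'' → ∀ n : ℕ, ∀ q : T × ℕ,
        H.Adj q (t'', n) → q.1 < t → q.1 ∈ St ∧ q.2 < St.card := by
  intro t
  obtain ⟨St, hSt, hSt_ladder⟩ := hstar t
  refine ⟨St, hSt, fun t'' ht n q hadj hqt => ?_⟩
  have hdown : InflAdj ladder (t'', n) q := by
    refine ((hH _ _).mp hadj).resolve_left fun hup => ?_
    exact (hqt.trans ht).not_ge (hup.fst_le_s17 fun s hs k => ((hGladder s hs).2.1 k).2)
  obtain ⟨hlim, rfl⟩ := hdown.eq_ladder_of_lt_of_lt hqt ht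
  obtain ⟨hmono, hrung, -⟩ := hGladder t'' hlim
  have hmem : ∀ k ≤ n, ladder t'' k ∈ St := fun k hk =>
    hSt_ladder t'' ht _ (hrung k).1 (hrung k).2 ((hmono.monotone hk).trans_lt hqt)
  exact ⟨hmem n le_rfl, hmono.injective.lt_card_of_forall_le_mem hmem⟩

theorem stmt_17 {T : Type u} [PartialOrder T]
    -- T is an order tree ...
    (root : T) (hroot : ∀ t, root ≤ t)
    (hchain : ∀ t : T, IsChain (· ≤ ·) (Set.Iic t))
    [WellFoundedLT T]
    -- ... which is Aronszajn: size ℵ₁, countable branches and countable levels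
    (hsize : #T = Cardinal.aleph 1)
    (hbranch : ∀ C : Set T, IsMaxChain (· ≤ ·) C → C.Countable)
    (hlevel : ∀ o : Ordinal.{u}, {t : T | rk t = o}.Countable)
    -- G is a sparse T-graph: edges only between comparable nodes, lower
    -- neighbourhoods cofinal, at limits given exactly by the ladder system
    (G : SimpleGraph T) (ladder : T → ℕ → T)
    (hGcomp : ∀ s t : T, G.Adj s t → s < t ∨ t < s)
    (hGcof : ∀ t s : T, s < t → ∃ s' : T, G.Adj s' t ∧ s ≤ s' ∧ s' < t)
    (hGladder : ∀ t : T, IsLimitPt t →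
      StrictMono (ladder t) ∧ (∀ n, G.Adj (ladder t n) t ∧ ladder t n < t) ∧
      ∀ s : T, G.Adj s t → s < t → ∃ n, s = ladder t n)
    -- property (⋆)
    (hstar : ∀ t : T, ∃ St : Finset T, (∀ s ∈ St, s < t) ∧
      ∀ t'' : T, t < t'' → ∀ s : T, G.Adj s t'' → s < t'' → s < t → s ∈ St)
    -- H is the ray inflation G ♯ ℕ
    (H : SimpleGraph (T × ℕ))
    (hH : ∀ p q : T × ℕ, H.Adj p q ↔ InflAdj ladder p q ∨ InflAdj ladder q p) :
    -- property (⋆⋆) : N_H((t'',n)) ∩ ({t' < t} × ℕ) ⊆ S_t × |S_t|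
    ∀ t : T, ∃ St : Finset T, (∀ s ∈ St, s < t) ∧
      ∀ t'' : T, t < t'' → ∀ n : ℕ, ∀ q : T × ℕ,
        H.Adj q (t'', n) → q.1 < t → q.1 ∈ St ∧ q.2 < St.card :=
  stmt_17_general G ladder hGladder hstar H hH
end

section
/- Let ε be an end of a graph G and U a countable set of vertices. If there is an uncountable collection C of pairwise internally disjoint ε–U combs in G, then G contains a |C|-star of rays all belonging to ε: a ray R together with |C| many pairwise disjoint rays (R_i), each R_i a spine of a comb in C, disjoint from R, and for each i an infinite family of disjoint R_i–R paths such that paths from distinct families meet only in R. -/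
open Cardinal

/-!
Call a tooth *dominant* if infinitely many combs of the family share it. Since the combs are
internally disjoint, from a dominant tooth `d` one can reach `Rε` arbitrarily far out while
avoiding any finite set not containing `d`: take one of the infinitely many combs at `d` whose
interior misses the set, walk along it to its spine and leave the spine along one of its
infinitely many disjoint paths to `Rε` that misses the set. So each dominant tooth dominates
`ε`, and as the dominant teeth form a countable set they lie on a single ray `R₀ ∈ ε`, the union
of an increasing chain of paths, each continuing along `Rε` and detouring through one more
dominant tooth.

A non-dominant tooth lies on only finitely many combs and `U` is countable, so all but countably
many combs have infinitely many dominant teeth; as `R₀` is countable, all but countably many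
combs also have an interior disjoint from `R₀`. For each of the remaining `|C|` combs, its
paths to the dominant teeth, cut at their last spine vertex, are the required spine–`R₀` paths.
-/

open SimpleGraph Function

section General

variable {V : Type*} {G : SimpleGraph V}

theorem finite_setOf_inter_nonempty {ι α : Type*} {s : ι → Set α}
    (hs : Pairwise (Disjoint on s)) {F : Set α} (hF : F.Finite) :
    {i | (s i ∩ F).Nonempty}.Finite := by
  have : ∀ i : {i | (s i ∩ F).Nonempty}, ∃ x : F, x.1 ∈ s i :=
    fun ⟨_, x, hx, hxF⟩ => ⟨⟨x, hxF⟩, hx⟩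
  choose f hf using this
  have := hF.to_subtype
  refine Set.finite_coe_iff.1 (Finite.of_injective f fun i j hij => Subtype.ext ?_)
  by_contra hne
  exact Set.disjoint_left.1 (hs hne) (hf i) (hij ▸ hf j)

theorem SimpleGraph.Walk.IsPath.append {u v w : V} {p : G.Walk u v} {q : G.Walk v w}
    (hp : p.IsPath) (hq : q.IsPath) (h : ∀ x ∈ p.support, x ∈ q.support → x = v) :
    (p.append q).IsPath := by
  rw [Walk.isPath_def, Walk.support_append]
  have hv : v ∉ q.support.tail := by
    have := hq.support_nodup
    rw [← q.cons_tail_support] at this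
    exact (List.nodup_cons.1 this).1
  refine hp.support_nodup.append (hq.support_nodup.sublist q.support.tail_sublist) ?_
  intro x hxp hxq
  exact hv (h x hxp (List.mem_of_mem_tail hxq) ▸ hxq)

theorem SimpleGraph.Walk.exists_prefix_until_mem {u v : V} (p : G.Walk u v) {S : Set V}
    (hv : v ∈ S) :
    ∃ x ∈ S, ∃ q : G.Walk u x, q.support <+: p.support ∧ ∀ y ∈ q.support, y ∈ S → y = x := by
  induction p with
  | nil => exact ⟨_, hv, Walk.nil, List.prefix_refl _, by simp⟩
  | @cons u u' v h p ih =>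
    by_cases hu : u ∈ S
    · exact ⟨u, hu, Walk.nil, by simp, by simp⟩
    · obtain ⟨x, hx, q, hpre, hfirst⟩ := ih hv
      refine ⟨x, hx, Walk.cons h q, by simpa using hpre, ?_⟩
      simp only [Walk.support_cons, List.mem_cons, forall_eq_or_imp]
      exact ⟨fun h' => absurd h' hu, hfirst⟩

theorem exists_walk_support_eq_map_range' {R : ℕ → V} (hR : ∀ n, G.Adj (R n) (R (n + 1)))
    {m t : ℕ} (h : m ≤ t) :
    ∃ Q : G.Walk (R m) (R t), Q.support = (List.range' m (t - m + 1)).map R := by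
  induction t, h using Nat.le_induction with
  | base => exact ⟨Walk.nil, by simp⟩
  | succ t hmt ih =>
    obtain ⟨Q, hQ⟩ := ih
    refine ⟨Q.concat (hR t), ?_⟩
    rw [Walk.support_concat, hQ, show t + 1 - m + 1 = t - m + 1 + 1 by omega,
      List.range'_concat (n := t - m + 1), List.map_append, List.map_singleton]
    congr 3
    omega

theorem exists_walk_mem_range {R : ℕ → V} (hR : ∀ n, G.Adj (R n) (R (n + 1))) (m n : ℕ) :
    ∃ Q : G.Walk (R m) (R n), ∀ v ∈ Q.support, v ∈ Set.range R := by
  obtain ⟨Q₁, hQ₁⟩ := exists_walk_support_eq_map_range' hR (Nat.zero_le m)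
  obtain ⟨Q₂, hQ₂⟩ := exists_walk_support_eq_map_range' hR (Nat.zero_le n)
  refine ⟨Q₁.reverse.append Q₂, fun v hv => ?_⟩
  rw [Walk.mem_support_append_iff, Walk.support_reverse, List.mem_reverse, hQ₁, hQ₂] at hv
  rcases hv with hv | hv <;> obtain ⟨j, -, rfl⟩ := List.mem_map.1 hv <;> exact ⟨j, rfl⟩

theorem IsRay.exists_path_segment {R : ℕ → V} (hR : IsRay G R) {m t : ℕ} (h : m ≤ t) :
    ∃ Q : G.Walk (R m) (R t), Q.IsPath ∧ ∀ v, v ∈ Q.support ↔ ∃ j ∈ Set.Icc m t, R j = v := by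
  obtain ⟨Q, hQ⟩ := exists_walk_support_eq_map_range' hR.2 h
  refine ⟨Q, ?_, fun v => ?_⟩
  · rw [Walk.isPath_def, hQ]
    exact (List.nodup_range' (s := m)).map hR.1
  · simp only [hQ, List.mem_map, List.mem_range'_1, Set.mem_Icc]
    constructor <;> rintro ⟨j, hj, rfl⟩ <;> exact ⟨j, by omega, rfl⟩

theorem IsRay.exists_path_segment_avoiding {R : ℕ → V} (hR : IsRay G R) {F : Set V} {m t : ℕ}
    (hFm : ∀ j, R j ∈ F → j ≤ m) (h : m ≤ t) :
    ∃ Q : G.Walk (R m) (R t), Q.IsPath ∧ (∀ x ∈ Q.support, x ∈ F → x = R m) ∧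
      ∀ v, v ∈ Q.support ↔ ∃ j ∈ Set.Icc m t, R j = v := by
  obtain ⟨Q, hQ, hQs⟩ := hR.exists_path_segment h
  refine ⟨Q, hQ, fun x hx hxF => ?_, hQs⟩
  obtain ⟨j, hj, rfl⟩ := (hQs x).1 hx
  rw [le_antisymm (hFm j hxF) hj.1]

theorem rayEquiv_of_injective {R₁ R₂ : ℕ → V} (hR₂ : Injective R₂) {g : ℕ → ℕ}
    (hg : Injective g) (h : ∀ n, R₂ (g n) ∈ Set.range R₁) : RayEquiv G R₁ R₂ := by
  refine ⟨fun n => R₂ (g n), fun n => R₂ (g n), fun _ => Walk.nil, fun _ => Walk.IsPath.nil, h,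
    fun n => ⟨g n, rfl⟩, fun m n hmn x hxm hxn => hmn (hg (hR₂ ?_))⟩
  simp only [Walk.support_nil, List.mem_singleton] at hxm hxn
  exact hxm.symm.trans hxn

theorem RayEquiv.exists_walk_avoiding {R₁ R₂ : ℕ → V} (h : RayEquiv G R₁ R₂) {F : Set V}
    (hF : F.Finite) : ∃ m n, ∃ W : G.Walk (R₁ m) (R₂ n), ∀ x ∈ W.support, x ∉ F := by
  obtain ⟨a, b, w, -, ha, hb, hdisj⟩ := h
  have hfin : {k | ({x | x ∈ (w k).support} ∩ F).Nonempty}.Finite :=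
    finite_setOf_inter_nonempty (fun k l hkl => Set.disjoint_left.2 (hdisj k l hkl)) hF
  obtain ⟨k, hk⟩ := hfin.exists_notMem
  obtain ⟨m, hm⟩ := ha k
  obtain ⟨n, hn⟩ := hb k
  exact ⟨m, n, (w k).copy hm.symm hn.symm, fun x hx hxF => hk ⟨x, by simpa using hx, hxF⟩⟩

end General

section Domination

variable {V : Type*} {G : SimpleGraph V} {Rε : ℕ → V} {d : V}

/-- A finite-obstruction form of "`d` dominates the end of `Rε`". -/
def DominatesRay (G : SimpleGraph V) (Rε : ℕ → V) (d : V) : Prop :=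
  ∀ F : Set V, F.Finite → d ∉ F → ∀ N, ∃ t, N < t ∧ ∃ A : G.Walk d (Rε t), A.IsPath ∧
    (∀ x ∈ A.support, x ∉ F) ∧ ∀ x ∈ A.support, x ∈ Set.range Rε → x = d ∨ x = Rε t

theorem dominatesRay_of_forall_finite
    (h : ∀ F : Set V, F.Finite → d ∉ F →
      ∃ T, Rε T ≠ d ∧ ∃ W : G.Walk d (Rε T), ∀ x ∈ W.support, x ∉ F) :
    DominatesRay G Rε d := by
  classical
  intro F hF hdF N
  obtain ⟨T, hTd, W, hW⟩ := h ((F ∪ Rε '' Set.Iic N) \ {d})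
    ((hF.union ((Set.finite_Iic N).image Rε)).sdiff) (fun h => h.2 rfl)
  obtain ⟨_, ⟨⟨t, rfl⟩, htd⟩, A, hpre, hfirst⟩ :=
    W.bypass.exists_prefix_until_mem (S := Set.range Rε \ {d}) ⟨⟨T, rfl⟩, hTd⟩
  have hAW : ∀ x ∈ A.support, x ∈ W.support :=
    fun x hx => W.support_bypass_subset_support (hpre.subset hx)
  refine ⟨t, ?_, A, ?_, ?_, ?_⟩
  · by_contra! htN
    exact hW _ (hAW _ A.end_mem_support) ⟨Or.inr ⟨t, htN, rfl⟩, htd⟩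
  · rw [Walk.isPath_def]
    exact W.bypass_isPath.support_nodup.sublist hpre.sublist
  · intro x hx hxF
    exact hW x (hAW x hx) ⟨Or.inl hxF, fun hxd => hdF (hxd ▸ hxF)⟩
  · intro x hx hxR
    by_cases hxd : x = d
    · exact Or.inl hxd
    · exact Or.inr (hfirst x hx ⟨hxR, hxd⟩)

theorem DominatesRay.exists_detour (hd : DominatesRay G Rε d) {F : Set V} (hF : F.Finite)
    (hdF : d ∉ F) (N : ℕ) :
    ∃ t s, N < t ∧ t < s ∧ ∃ W : G.Walk (Rε t) (Rε s), W.IsPath ∧ d ∈ W.support ∧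
      (∀ x ∈ W.support, x ∉ F) ∧
      ∀ x ∈ W.support, x ∈ Set.range Rε → x = d ∨ x = Rε t ∨ x = Rε s := by
  obtain ⟨t, hNt, A, hA, hAF, hAR⟩ := hd F hF hdF N
  obtain ⟨s, hts, B, hB, hBF, hBR⟩ :=
    hd (F ∪ {x | x ∈ A.support} \ {d}) (hF.union A.support.finite_toSet.sdiff) (by simp [hdF]) t
  have hmem : ∀ x, x ∈ (A.reverse.append B).support ↔ x ∈ A.support ∨ x ∈ B.support := by
    simp [Walk.mem_support_append_iff]
  refine ⟨t, s, hNt, hts, A.reverse.append B, hA.reverse.append hB ?_, ?_, ?_, ?_⟩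
  · intro x hxA hxB
    by_contra hxd
    exact hBF x hxB (Or.inr ⟨by simpa using hxA, hxd⟩)
  · exact (hmem d).2 (Or.inl A.start_mem_support)
  · intro x hx
    rcases (hmem x).1 hx with hx | hx
    · exact hAF x hx
    · exact fun hxF => hBF x hx (Or.inl hxF)
  · intro x hx hxR
    rcases (hmem x).1 hx with hx | hx
    · rcases hAR x hx hxR with h | h <;> simp [h]
    · rcases hBR x hx hxR with h | h <;> simp [h]

theorem DominatesRay.exists_path_through (hRε : IsRay G Rε) (hd : DominatesRay G Rε d)
    {F : Set V} (hF : F.Finite) {m : ℕ} (hFm : ∀ j, Rε j ∈ F → j ≤ m) (hdF : d ∉ F)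
    (hdR : ∀ l, m ≤ l → Rε l ≠ d) :
    ∃ s, m < s ∧ ∃ Q : G.Walk (Rε m) (Rε s), Q.IsPath ∧ (∀ x ∈ Q.support, x ∈ F → x = Rε m) ∧
      (∀ j, Rε j ∈ Q.support → j ≤ s) ∧ d ∈ Q.support := by
  obtain ⟨t, s, hmt, hts, W, hW, hdW, hWF, hWR⟩ := hd.exists_detour hF hdF m
  obtain ⟨S, hS, hSF, hSs⟩ := hRε.exists_path_segment_avoiding hFm hmt.le
  refine ⟨s, by omega, S.append W, hS.append hW ?_, ?_, ?_,
    (Walk.mem_support_append_iff _ _).2 (Or.inr hdW)⟩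
  · intro x hxS hxW
    obtain ⟨j, hj, rfl⟩ := (hSs x).1 hxS
    rcases hWR _ hxW ⟨j, rfl⟩ with h | h | h
    · exact absurd h (hdR j hj.1)
    · exact h
    · have := hRε.1 h
      have := hj.2
      omega
  · intro x hx hxF
    rcases (Walk.mem_support_append_iff _ _).1 hx with hx | hx
    · exact hSF x hx hxF
    · exact absurd hxF (hWF x hx)
  · intro j hj
    rcases (Walk.mem_support_append_iff _ _).1 hj with hj | hj
    · obtain ⟨j', hj', hjj'⟩ := (hSs _).1 hj
      have := hRε.1 hjj'
      have := hj'.2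
      omega
    · rcases hWR _ hj ⟨j, rfl⟩ with h | h | h
      · by_contra hjs
        exact hdR j (by omega) h
      · have := hRε.1 h
        omega
      · exact (hRε.1 h).le

theorem DominatesRay.exists_path_extension (hRε : IsRay G Rε) (hd : DominatesRay G Rε d)
    {F : Set V} (hF : F.Finite) {m : ℕ} (hFm : ∀ j, Rε j ∈ F → j ≤ m) :
    ∃ s, m < s ∧ ∃ Q : G.Walk (Rε m) (Rε s), Q.IsPath ∧ (∀ x ∈ Q.support, x ∈ F → x = Rε m) ∧
      (∀ j, Rε j ∈ Q.support → j ≤ s) ∧ (d ∈ F ∨ d ∈ Q.support) := by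
  have hseg : ∀ l, m ≤ l → ∃ Q : G.Walk (Rε m) (Rε (l + 1)), Q.IsPath ∧
      (∀ x ∈ Q.support, x ∈ F → x = Rε m) ∧ (∀ j, Rε j ∈ Q.support → j ≤ l + 1) ∧
      Rε l ∈ Q.support := by
    intro l hl
    obtain ⟨Q, hQ, hQF, hQs⟩ := hRε.exists_path_segment_avoiding hFm (by omega : m ≤ l + 1)
    refine ⟨Q, hQ, hQF, fun j hj => ?_, (hQs _).2 ⟨l, ⟨hl, by omega⟩, rfl⟩⟩
    obtain ⟨j', hj', hjj'⟩ := (hQs _).1 hj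
    exact hRε.1 hjj' ▸ hj'.2
  by_cases hdF : d ∈ F
  · obtain ⟨Q, hQ, hQF, hQR, -⟩ := hseg m le_rfl
    exact ⟨m + 1, by omega, Q, hQ, hQF, hQR, Or.inl hdF⟩
  by_cases hdR : ∃ l, m ≤ l ∧ Rε l = d
  · obtain ⟨l, hml, rfl⟩ := hdR
    obtain ⟨Q, hQ, hQF, hQR, hlQ⟩ := hseg l hml
    exact ⟨l + 1, by omega, Q, hQ, hQF, hQR, Or.inr hlQ⟩
  push Not at hdR
  obtain ⟨s, hms, Q, hQ, hQF, hQR, hdQ⟩ := hd.exists_path_through hRε hF hFm hdF hdR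
  exact ⟨s, hms, Q, hQ, hQF, hQR, Or.inr hdQ⟩

theorem exists_chain_through (hRε : IsRay G Rε) {f : ℕ → V} (hf : ∀ k, DominatesRay G Rε (f k)) :
    ∃ (m : ℕ → ℕ) (P : ∀ k, G.Walk (Rε 0) (Rε (m k))), StrictMono m ∧ (∀ k, (P k).IsPath) ∧
      (∀ k, ∃ Q : G.Walk (Rε (m k)) (Rε (m (k + 1))), P (k + 1) = (P k).append Q) ∧
      ∀ k, f k ∈ (P (k + 1)).support := by
  -- Meeting `Rε` in no vertex beyond its end lets a path be continued along `Rε`.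
  let State := Σ m, {P : G.Walk (Rε 0) (Rε m) // P.IsPath ∧ ∀ j, Rε j ∈ P.support → j ≤ m}
  have step : ∀ (σ : State) (k : ℕ), ∃ σ' : State, σ.1 < σ'.1 ∧
      (∃ Q, σ'.2.1 = σ.2.1.append Q) ∧ f k ∈ σ'.2.1.support := by
    rintro ⟨m, P, hP, hPm⟩ k
    obtain ⟨s, hms, Q, hQ, hQF, hQR, hdQ⟩ :=
      (hf k).exists_path_extension hRε P.support.finite_toSet hPm
    refine ⟨⟨s, P.append Q, hP.append hQ fun x hxP hxQ => hQF x hxQ hxP, fun j hj => ?_⟩,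
      hms, ⟨Q, rfl⟩, (Walk.mem_support_append_iff _ _).2 hdQ⟩
    exact ((Walk.mem_support_append_iff _ _).1 hj).elim (fun hj => (hPm j hj).trans hms.le) (hQR j)
  choose next hnext using step
  let σ : ℕ → State := fun k => Nat.rec
    ⟨0, Walk.nil, Walk.IsPath.nil, fun j hj => (hRε.1 (by simpa using hj)).le⟩
    (fun k σ => next σ k) k
  exact ⟨fun k => (σ k).1, fun k => (σ k).2.1, strictMono_nat_of_lt_succ fun k => (hnext (σ k) k).1,
    fun k => (σ k).2.2.1, fun k => (hnext (σ k) k).2.1, fun k => (hnext (σ k) k).2.2⟩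

theorem exists_isRay_of_append_chain {x : V} {y : ℕ → V} {P : ∀ k, G.Walk x (y k)}
    (hP : ∀ k, (P k).IsPath) (hy : ∀ k, y k ≠ y (k + 1))
    (hext : ∀ k, ∃ Q : G.Walk (y k) (y (k + 1)), P (k + 1) = (P k).append Q) :
    ∃ R₀, IsRay G R₀ ∧ ∀ k, ∀ v ∈ (P k).support, v ∈ Set.range R₀ := by
  have hlen : StrictMono fun k => (P k).length := by
    refine strictMono_nat_of_lt_succ fun k => ?_
    obtain ⟨Q, hQ⟩ := hext k
    rw [hQ, Walk.length_append, lt_add_iff_pos_right, Nat.pos_iff_ne_zero]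
    exact fun h => hy k (Walk.eq_of_length_eq_zero h)
  have hstab : ∀ k K, k ≤ K → ∀ i ≤ (P k).length, (P K).getVert i = (P k).getVert i := by
    intro k K hkK
    induction K, hkK using Nat.le_induction with
    | base => exact fun _ _ => rfl
    | succ K hkK ih =>
      intro i hi
      obtain ⟨Q, hQ⟩ := hext K
      rw [hQ, Walk.getVert_append', if_pos (hi.trans (hlen.monotone hkK)), ih i hi]
  let R₀ : ℕ → V := fun n => (P (n + 1)).getVert n
  have hR₀ : ∀ k i, i ≤ (P k).length → (P k).getVert i = R₀ i := fun k i hi => by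
    rw [← hstab k (max k (i + 1)) (le_max_left _ _) i hi,
      hstab (i + 1) (max k (i + 1)) (le_max_right _ _) i (i.le_succ.trans (hlen.id_le _))]
  refine ⟨R₀, ⟨fun n n' h => ?_, fun n => ?_⟩, fun k v hv => ?_⟩
  · have hK : ∀ j ≤ max n n', j ≤ (P (max n n')).length := fun j hj => hj.trans (hlen.id_le _)
    rw [← hR₀ _ n (hK n (le_max_left _ _)), ← hR₀ _ n' (hK n' (le_max_right _ _))] at h
    exact (hP _).getVert_injOn (hK n (le_max_left _ _)) (hK n' (le_max_right _ _)) h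
  · have hn : n + 1 ≤ (P (n + 1)).length := hlen.id_le _
    rw [← hR₀ (n + 1) n (by omega), ← hR₀ (n + 1) (n + 1) hn]
    exact (P (n + 1)).adj_getVert_succ (by omega)
  · obtain ⟨i, rfl, hi⟩ := Walk.mem_support_iff_exists_getVert.1 hv
    exact ⟨i, (hR₀ k i hi).symm⟩

theorem exists_isRay_rayEquiv_subset_range (hRε : IsRay G Rε) {D : Set V} (hD : D.Countable)
    (hdom : ∀ d ∈ D, DominatesRay G Rε d) :
    ∃ R₀, IsRay G R₀ ∧ RayEquiv G R₀ Rε ∧ D ⊆ Set.range R₀ := by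
  rcases D.eq_empty_or_nonempty with rfl | hne
  · exact ⟨Rε, hRε, rayEquiv_of_injective hRε.1 injective_id fun n => ⟨n, rfl⟩,
      Set.empty_subset _⟩
  obtain ⟨f, rfl⟩ := hD.exists_eq_range hne
  obtain ⟨m, P, hm, hP, hext, hfP⟩ := exists_chain_through hRε fun k => hdom _ ⟨k, rfl⟩
  obtain ⟨R₀, hR₀, hPR₀⟩ :=
    exists_isRay_of_append_chain hP (fun k h => (hm k.lt_succ_self).ne (hRε.1 h)) hext
  exact ⟨R₀, hR₀, rayEquiv_of_injective hRε.1 hm.injective fun k => hPR₀ k _ (P k).end_mem_support,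
    Set.range_subset_iff.2 fun k => hPR₀ (k + 1) _ (hfP k)⟩

end Domination

section Combs

variable {V : Type*} {G : SimpleGraph V}

structure CombFamily (G : SimpleGraph V) (Rε : ℕ → V) (U : Set V) (ι : Type*) where
  spine : ι → ℕ → V
  isRay_spine : ∀ i, IsRay G (spine i)
  rayEquiv_spine : ∀ i, RayEquiv G (spine i) Rε
  spine_notMem : ∀ i n, spine i n ∉ U
  base : ι → ℕ → V
  tooth : ι → ℕ → V
  toothPath : ∀ i n, G.Walk (base i n) (tooth i n)
  isPath_toothPath : ∀ i n, (toothPath i n).IsPath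
  base_mem : ∀ i n, base i n ∈ Set.range (spine i)
  tooth_mem : ∀ i n, tooth i n ∈ U
  eq_tooth_of_mem : ∀ i n, ∀ x ∈ (toothPath i n).support, x ∈ U → x = tooth i n
  toothPath_disjoint : ∀ i m n, m ≠ n → ∀ x ∈ (toothPath i m).support, x ∉ (toothPath i n).support

namespace CombFamily

variable {Rε : ℕ → V} {U : Set V} {ι : Type*} (C : CombFamily G Rε U ι)

def interior (i : ι) : Set V :=
  (Set.range (C.spine i) ∪ ⋃ n, {x | x ∈ (C.toothPath i n).support}) \ U

def dominantTeeth : Set V := {u ∈ U | {i | ∃ n, C.tooth i n = u}.Infinite}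

theorem spine_mem_interior (i : ι) (n : ℕ) : C.spine i n ∈ C.interior i :=
  ⟨Or.inl ⟨n, rfl⟩, C.spine_notMem i n⟩

theorem mem_interior_or_eq_tooth {i : ι} {n : ℕ} {x : V} (hx : x ∈ (C.toothPath i n).support) :
    x ∈ C.interior i ∨ x = C.tooth i n := by
  by_cases hxU : x ∈ U
  · exact Or.inr (C.eq_tooth_of_mem i n x hx hxU)
  · exact Or.inl ⟨Or.inr (Set.mem_iUnion.2 ⟨n, hx⟩), hxU⟩

theorem dominatesRay_of_mem_dominantTeeth (hC : Pairwise (Disjoint on C.interior)) {d : V}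
    (hd : d ∈ C.dominantTeeth) : DominatesRay G Rε d := by
  refine dominatesRay_of_forall_finite fun F hF hdF => ?_
  obtain ⟨i, ⟨n, rfl⟩, hiF⟩ := (hd.2.sdiff (finite_setOf_inter_nonempty hC hF)).nonempty
  have hiF : ∀ x ∈ F, x ∉ C.interior i := fun x hxF hx => hiF ⟨x, hx, hxF⟩
  obtain ⟨m, hm⟩ := C.base_mem i n
  obtain ⟨M, T, W, hW⟩ := (C.rayEquiv_spine i).exists_walk_avoiding (hF.insert (C.tooth i n))
  obtain ⟨S, hS⟩ := exists_walk_mem_range (C.isRay_spine i).2 m M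
  refine ⟨T, fun h => hW _ W.end_mem_support (h ▸ Set.mem_insert _ _),
    (C.toothPath i n).reverse.append ((S.copy hm rfl).append W), fun x hx hxF => ?_⟩
  simp only [Walk.mem_support_append_iff, Walk.support_reverse, List.mem_reverse,
    Walk.support_copy] at hx
  rcases hx with hx | hx | hx
  · rcases C.mem_interior_or_eq_tooth hx with h | rfl
    · exact hiF x hxF h
    · exact hdF hxF
  · obtain ⟨j, rfl⟩ := hS x hx
    exact hiF _ hxF (C.spine_mem_interior i j)
  · exact hW x hx (Set.mem_insert_of_mem _ hxF)

theorem countable_dominantTeeth (hU : U.Countable) : C.dominantTeeth.Countable :=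
  hU.mono fun _ h => h.1

theorem countable_setOf_finite_dominantTeeth (hU : U.Countable) :
    {i | {n | C.tooth i n ∈ C.dominantTeeth}.Finite}.Countable := by
  have hS : {u ∈ U | {i | ∃ n, C.tooth i n = u}.Finite}.Countable := hU.mono fun _ h => h.1
  refine (hS.biUnion fun u hu => hu.2.countable).mono fun i hi => ?_
  obtain ⟨n, hn⟩ := Set.Finite.infinite_compl hi |>.nonempty
  exact Set.mem_biUnion ⟨C.tooth_mem i n, Set.not_infinite.1 fun h => hn ⟨C.tooth_mem i n, h⟩⟩
    ⟨n, rfl⟩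

theorem mk_setOf_infinite_teeth_disjoint (hU : U.Countable)
    (hC : Pairwise (Disjoint on C.interior)) (hι : ℵ₀ < #ι) {S : Set V} (hS : S.Countable)
    (hDS : C.dominantTeeth ⊆ S) :
    #{i | {n | C.tooth i n ∈ S}.Infinite ∧ Disjoint (C.interior i) S} = #ι := by
  have : Infinite ι := Cardinal.infinite_iff.2 hι.le
  have hbad : {i | {n | C.tooth i n ∈ S}.Infinite ∧ Disjoint (C.interior i) S}ᶜ.Countable := by
    refine ((C.countable_setOf_finite_dominantTeeth hU).union
      (Set.countable_ofPred_nonempty_of_disjoint (f := fun i => C.interior i ∩ S)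
        (fun i j hij => (hC hij).mono Set.inter_subset_left Set.inter_subset_left)
        (fun _ => Set.inter_subset_right) hS)).mono fun i hi => ?_
    simp only [Set.mem_compl_iff, Set.mem_ofPred_eq, not_and_or, Set.not_infinite,
      Set.not_disjoint_iff_nonempty_inter] at hi
    exact hi.imp_left fun hi => hi.subset fun n hn => hDS hn
  simpa using Cardinal.mk_compl_of_infinite _
    ((Cardinal.le_aleph0_iff_set_countable.2 hbad).trans_lt hι)

theorem exists_trimmed_toothPath (i : ι) (n : ℕ) :
    ∃ p ∈ Set.range (C.spine i), ∃ L : G.Walk p (C.tooth i n), L.IsPath ∧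
      (∀ x ∈ L.support, x ∈ (C.toothPath i n).support) ∧
      ∀ x ∈ L.support, x ∈ Set.range (C.spine i) → x = p := by
  obtain ⟨p, hp, L, hpre, hfirst⟩ :=
    (C.toothPath i n).reverse.exists_prefix_until_mem (C.base_mem i n)
  refine ⟨p, hp, L.reverse, ?_, fun x hx => ?_, fun x hx => hfirst x (by simpa using hx)⟩
  · rw [Walk.isPath_reverse_iff, Walk.isPath_def]
    exact (C.isPath_toothPath i n).reverse.support_nodup.sublist hpre.sublist
  · simpa using hpre.subset (by simpa using hx)

theorem exists_legs (S : Set V) :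
    ∃ (p q : ι → ℕ → V) (L : ∀ i n, G.Walk (p i n) (q i n)),
      ∀ i, {n | C.tooth i n ∈ S}.Infinite → Disjoint (C.interior i) S →
        (∀ n, (L i n).IsPath ∧ p i n ∈ Set.range (C.spine i) ∧ q i n ∈ S) ∧
        (∀ n, ∀ x ∈ (L i n).support,
          (x ≠ p i n → x ∉ Set.range (C.spine i)) ∧ (x ≠ q i n → x ∉ S)) ∧
        (∀ m n, m ≠ n → ∀ x ∈ (L i m).support, x ∉ (L i n).support) ∧
        ∀ n, ∀ x ∈ (L i n).support, x ∈ C.interior i ∨ x ∈ S := by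
  choose p hp L hL hsub hfirst using C.exists_trimmed_toothPath
  have henum : ∀ i, ∃ g : ℕ → ℕ, {n | C.tooth i n ∈ S}.Infinite →
      Injective g ∧ ∀ k, C.tooth i (g k) ∈ S := by
    intro i
    by_cases hi : {n | C.tooth i n ∈ S}.Infinite
    · exact ⟨fun k => hi.natEmbedding _ k, fun _ =>
        ⟨fun k l h => (hi.natEmbedding _).injective (Subtype.ext h),
          fun k => (hi.natEmbedding _ k).2⟩⟩
    · exact ⟨id, fun h => absurd h hi⟩
  choose g hg using henum
  refine ⟨fun i k => p i (g i k), fun i k => C.tooth i (g i k), fun i k => L i (g i k),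
    fun i hinf hdisj => ?_⟩
  obtain ⟨hginj, hgS⟩ := hg i hinf
  refine ⟨fun k => ⟨hL i _, hp i _, hgS k⟩, fun k x hx => ⟨fun hxp hx' => hxp (hfirst i _ x hx hx'),
    fun hxq hxS => ?_⟩, fun k l hkl x hxk hxl => ?_, fun k x hx => ?_⟩
  · rcases C.mem_interior_or_eq_tooth (hsub i _ x hx) with h | h
    · exact Set.disjoint_left.1 hdisj h hxS
    · exact hxq h
  · exact C.toothPath_disjoint i _ _ (hginj.ne hkl) x (hsub i _ x hxk) (hsub i _ x hxl)
  · exact (C.mem_interior_or_eq_tooth (hsub i _ x hx)).imp_right fun h : x = _ => h ▸ hgS k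

end CombFamily

end Combs

theorem stmt_18 {V : Type u} (G : SimpleGraph V)
    -- an end ε of G, represented by a ray Rε
    (Rε : ℕ → V) (hRε : IsRay G Rε)
    -- a countable set U of vertices
    (U : Set V) (hU : U.Countable)
    -- an uncountable collection, indexed by ι, of ε–U combs:
    (ι : Type u) (hunc : ℵ₀ < #ι)
    -- spines: rays in ε avoiding U
    (R : ι → ℕ → V) (hR : ∀ i, IsRay G (R i))
    (hRend : ∀ i, RayEquiv G (R i) Rε)
    (hRU : ∀ i n, R i n ∉ U)
    -- for each comb, an infinite family of disjoint paths from its spine to U,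
    -- meeting U only in their last vertex (the teeth)
    (a b : ι → ℕ → V) (w : ∀ i n, G.Walk (a i n) (b i n))
    (hw : ∀ i n, (w i n).IsPath)
    (ha : ∀ i n, a i n ∈ Set.range (R i))
    (hb : ∀ i n, b i n ∈ U)
    (hwU : ∀ i n, ∀ x ∈ (w i n).support, x ∈ U → x = b i n)
    (hwdisj : ∀ i, ∀ m n : ℕ, m ≠ n → ∀ x ∈ (w i m).support, x ∉ (w i n).support)
    -- the combs are internally disjoint: their interiors (comb minus U) are disjoint
    (hint : ∀ i j, i ≠ j → ∀ x : V,
      x ∈ (Set.range (R i) ∪ ⋃ n, {y | y ∈ (w i n).support}) \ U →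
      x ∉ (Set.range (R j) ∪ ⋃ n, {y | y ∈ (w j n).support}) \ U) :
    -- then G contains a |C|-star of rays in ε whose leaf rays are spines of the combs:
    ∃ R₀ : ℕ → V, IsRay G R₀ ∧ RayEquiv G R₀ Rε ∧
      ∃ J : Set ι, #J = #ι ∧
        -- the leaf rays are disjoint from the centre ray R₀
        (∀ i ∈ J, ∀ n m : ℕ, R i n ≠ R₀ m) ∧
        ∃ (p q : ι → ℕ → V) (ww : ∀ i n, G.Walk (p i n) (q i n)),
          -- for each leaf, an infinite family of R_i–R₀ paths
          (∀ i ∈ J, ∀ n, (ww i n).IsPath ∧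
            p i n ∈ Set.range (R i) ∧ q i n ∈ Set.range R₀) ∧
          -- independent: only their endvertices lie on the rays
          (∀ i ∈ J, ∀ n, ∀ x ∈ (ww i n).support,
            (x ≠ p i n → x ∉ Set.range (R i)) ∧ (x ≠ q i n → x ∉ Set.range R₀)) ∧
          -- paths within a family are disjoint
          (∀ i ∈ J, ∀ m n : ℕ, m ≠ n → ∀ x ∈ (ww i m).support, x ∉ (ww i n).support) ∧
          -- paths from distinct families meet only in R₀
          (∀ i ∈ J, ∀ j ∈ J, i ≠ j → ∀ m n : ℕ, ∀ x : V,
            x ∈ (ww i m).support → x ∈ (ww j n).support → x ∈ Set.range R₀) := by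
  let C : CombFamily G Rε U ι := ⟨R, hR, hRend, hRU, a, b, w, hw, ha, hb, hwU, hwdisj⟩
  have hC : Pairwise (Disjoint on C.interior) := fun i j hij => Set.disjoint_left.2 (hint i j hij)
  obtain ⟨R₀, hR₀, hR₀ε, hDR₀⟩ := exists_isRay_rayEquiv_subset_range hRε
    (C.countable_dominantTeeth hU) fun d hd => C.dominatesRay_of_mem_dominantTeeth hC hd
  obtain ⟨p, q, L, hL⟩ := C.exists_legs (Set.range R₀)
  refine ⟨R₀, hR₀, hR₀ε, _,
    C.mk_setOf_infinite_teeth_disjoint hU hC hunc (Set.countable_range R₀) hDR₀,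
    fun i hi n m h => Set.disjoint_left.1 hi.2 (C.spine_mem_interior i n) ⟨m, h.symm⟩,
    p, q, L, fun i hi => (hL i hi.1 hi.2).1, fun i hi => (hL i hi.1 hi.2).2.1,
    fun i hi => (hL i hi.1 hi.2).2.2.1, fun i hi j hj hij m n x hxi hxj => ?_⟩
  rcases (hL i hi.1 hi.2).2.2.2 m x hxi with hx | hx
  · rcases (hL j hj.1 hj.2).2.2.2 n x hxj with hx' | hx'
    · exact absurd hx' (Set.disjoint_left.1 (hC hij) hx)
    · exact hx'
  · exact hx
end

section
/- Let κ be a cardinal with cf(κ) > ℵ₁, G a graph, ε an end of G, and R a collection of κ pairwise disjoint rays belonging to ε. Then there exist a vertex set U with |U| < κ and a collection C of κ pairwise internally disjoint ε–U combs in G whose spines all lie in R. -/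
open Cardinal

/-!
Build vertex sets `U_α`, `α < ω₁`, transfinitely: `U_α` consists of a ray of `ε` together with
all vertices of the combs in maximal families of internally disjoint `ε`–`U_β` combs with
spines in `R`, for all `β < α`. Since `cf κ > ℵ₁`, every `U_α` has size `< κ` as long as all
these families are smaller than `κ`; so if one of them has size `κ`, its first occurrence
provides `U`. Otherwise the union of all stages has size `< κ` and misses some ray `R i`
entirely. The disjoint paths between `R i` and the ray of `ε` turn `R i` into an `ε`–`U_α`
comb at every stage, always inside the same countable set; by maximality this comb meets a
comb of the family outside `U_α`, i.e. in a vertex that is new at stage `α + 1`. This gives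
`ℵ₁` distinct vertices in a countable set.
-/

universe u

open Set

theorem SimpleGraph.Walk.IsPath.exists_isPath_to_first_mem {V : Type*} {G : SimpleGraph V}
    {u v : V} {p : G.Walk u v} (hp : p.IsPath) {U : Set V} (hv : v ∈ U) :
    ∃ c ∈ U, ∃ q : G.Walk u c, q.IsPath ∧ q.support ⊆ p.support ∧
      ∀ x ∈ q.support, x ∈ U → x = c := by
  classical
  obtain ⟨c, hcU, hc, hfirst⟩ := p.exists_mem_support_forall_mem_support_imp_eq
    {x ∈ p.support.toFinset | x ∈ U} ⟨v, by simp [hv]⟩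
  have hsub := p.support_takeUntil_subset_support hc
  exact ⟨c, (Finset.mem_filter.1 hcU).2, p.takeUntil c hc, hp.takeUntil hc, hsub,
    fun x hx hxU => hfirst x (by simp [hsub hx, hxU]) hx⟩

theorem Cardinal.mk_iUnion_lt_of_lt_cof {α ι : Type u} {c : Cardinal.{u}} (hc : ℵ₀ ≤ c)
    {t : ι → Set α} (hι : #ι < c.ord.cof) (ht : ∀ i, #(t i) < c) : #(⋃ i, t i) < c :=
  (mk_iUnion_le t).trans_lt <|
    mul_lt_of_lt hc (hι.trans_le (Ordinal.cof_ord_le c)) (iSup_lt_of_lt_cof_ord hι ht)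

namespace EndCombs

variable {V ι : Type u} {G : SimpleGraph V} {R : ι → ℕ → V} {U : Set V}

structure Teeth (G : SimpleGraph V) where
  root : ℕ → V
  tip : ℕ → V
  walk : ∀ n, G.Walk (root n) (tip n)

def combVerts (R : ι → ℕ → V) (p : ι × Teeth G) : Set V :=
  range (R p.1) ∪ ⋃ n, {x | x ∈ (p.2.walk n).support}

theorem countable_combVerts (R : ι → ℕ → V) (p : ι × Teeth G) : (combVerts R p).Countable :=
  (countable_range _).union <|
    countable_iUnion fun n => (p.2.walk n).support.finite_toSet.countable

variable (G R) in
/-- `p` encodes the comb with spine `R p.1` whose `n`-th tooth is the path `p.2.walk n` from the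
spine to `U`. -/
def IsComb (U : Set V) (p : ι × Teeth G) : Prop :=
  (∀ n, R p.1 n ∉ U) ∧
  (∀ n, (p.2.walk n).IsPath ∧ p.2.root n ∈ range (R p.1) ∧ p.2.tip n ∈ U) ∧
  (∀ n, ∀ x ∈ (p.2.walk n).support, x ∈ U → x = p.2.tip n) ∧
  (∀ m n, m ≠ n → ∀ x ∈ (p.2.walk m).support, x ∉ (p.2.walk n).support)

variable (G R) in
def IsCombFamily (U : Set V) (F : Set (ι × Teeth G)) : Prop :=
  (∀ p ∈ F, IsComb G R U p) ∧ F.PairwiseDisjoint fun p => combVerts R p \ U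

/-- Internal disjointness forces distinct spines, since a spine avoids `U`. -/
theorem IsCombFamily.injOn_fst {F : Set (ι × Teeth G)} (hF : IsCombFamily G R U F) :
    F.InjOn Prod.fst := by
  intro p hp q hq hpq
  by_contra hne
  exact disjoint_left.1 (hF.2 hp hq hne) ⟨Or.inl ⟨0, rfl⟩, (hF.1 p hp).1 0⟩
    ⟨Or.inl ⟨0, by rw [hpq]⟩, (hF.1 p hp).1 0⟩

theorem IsCombFamily.mk_le {F : Set (ι × Teeth G)} (hF : IsCombFamily G R U F) : #F ≤ #ι :=
  (mk_image_eq_of_injOn _ _ hF.injOn_fst).symm.trans_le (mk_set_le _)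

theorem exists_maximal_isCombFamily (G : SimpleGraph V) (R : ι → ℕ → V) (U : Set V) :
    ∃ F, Maximal (IsCombFamily G R U) F :=
  zorn_subset {F | IsCombFamily G R U F} fun c hc hchain =>
    ⟨⋃₀ c, ⟨fun _ ⟨_, hF, hp⟩ => (hc hF).1 _ hp,
      (pairwiseDisjoint_sUnion hchain.directedOn).2 fun _ hF => (hc hF).2⟩,
      fun _ => subset_sUnion_of_mem⟩

theorem exists_not_disjoint_of_maximal {F : Set (ι × Teeth G)}
    (hF : Maximal (IsCombFamily G R U) F) {p : ι × Teeth G} (hp : IsComb G R U p)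
    (hpF : p ∉ F) : ∃ q ∈ F, ¬ Disjoint (combVerts R p \ U) (combVerts R q \ U) := by
  by_contra! h
  have hins : IsCombFamily G R U (insert p F) :=
    ⟨forall_mem_insert.2 ⟨hp, hF.1.1⟩, hF.1.2.insert fun q hq _ => h q hq⟩
  exact hpF (hF.2 hins (subset_insert p F) (mem_insert p F))

theorem exists_combs_of_isCombFamily [Nonempty V] {F : Set (ι × Teeth G)}
    (hF : IsCombFamily G R U F) :
    ∃ J : Set ι, #J = #F ∧
      ∃ (a b : ι → ℕ → V) (w : ∀ i n, G.Walk (a i n) (b i n)),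
        (∀ i ∈ J, ∀ n : ℕ, R i n ∉ U) ∧
        (∀ i ∈ J, ∀ n, (w i n).IsPath ∧ a i n ∈ Set.range (R i) ∧ b i n ∈ U) ∧
        (∀ i ∈ J, ∀ n, ∀ x ∈ (w i n).support, x ∈ U → x = b i n) ∧
        (∀ i ∈ J, ∀ m n : ℕ, m ≠ n → ∀ x ∈ (w i m).support, x ∉ (w i n).support) ∧
        (∀ i ∈ J, ∀ j ∈ J, i ≠ j → ∀ x : V,
          x ∈ (Set.range (R i) ∪ ⋃ n, {y | y ∈ (w i n).support}) \ U →
          x ∉ (Set.range (R j) ∪ ⋃ n, {y | y ∈ (w j n).support}) \ U) := by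
  obtain ⟨v⟩ := ‹Nonempty V›
  have : Nonempty (Teeth G) := ⟨⟨fun _ => v, fun _ => v, fun _ => .nil⟩⟩
  have hteeth : ∀ i ∈ Prod.fst '' F, ∃ t, (i, t) ∈ F := by
    rintro _ ⟨p, hp, rfl⟩
    exact ⟨p.2, hp⟩
  choose! t ht using hteeth
  refine ⟨Prod.fst '' F, mk_image_eq_of_injOn _ _ hF.injOn_fst,
    fun i => (t i).root, fun i => (t i).tip, fun i => (t i).walk,
    fun i hi => (hF.1 _ (ht i hi)).1, fun i hi => (hF.1 _ (ht i hi)).2.1,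
    fun i hi => (hF.1 _ (ht i hi)).2.2.1, fun i hi => (hF.1 _ (ht i hi)).2.2.2,
    fun i hi j hj hij _ hx => disjoint_left.1 (hF.2 (ht i hi) (ht j hj) ?_) hx⟩
  exact fun h => hij (congrArg Prod.fst h)

theorem _root_.RayEquiv.exists_countable_forall_isComb {i : ι} {r : ℕ → V}
    (h : RayEquiv G (R i) r) :
    ∃ S : Set V, S.Countable ∧ ∀ U : Set V, range r ⊆ U → (∀ n, R i n ∉ U) →
      ∃ t : Teeth G, IsComb G R U (i, t) ∧ combVerts R (i, t) ⊆ S := by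
  obtain ⟨a, b, w, hpath, ha, hb, hdisj⟩ := h
  refine ⟨combVerts R (i, ⟨a, b, w⟩), countable_combVerts R _, fun U hrU hiU => ?_⟩
  choose c hc q hq hqw hqU using fun n => (hpath n).exists_isPath_to_first_mem (hrU (hb n))
  exact ⟨⟨a, c, q⟩, ⟨hiU, fun n => ⟨hq n, ha n, hc n⟩, hqU,
      fun m n hmn x hxm hxn => hdisj m n hmn x (hqw m hxm) (hqw n hxn)⟩,
    union_subset_union_right _ (iUnion_mono fun n _ hx => hqw n hx)⟩

theorem exists_forall_notMem_of_mk_lt (hdisj : Pairwise fun i j => ∀ n m, R i n ≠ R j m)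
    (hU : #U < #ι) : ∃ i, ∀ n, R i n ∉ U := by
  by_contra! h
  choose n hn using h
  refine hU.not_ge (mk_le_of_injective (f := fun i => (⟨R i (n i), hn i⟩ : U)) fun i j hij => ?_)
  by_contra hne
  exact hdisj hne (n i) (n j) (congrArg Subtype.val hij)

variable (G R) in
noncomputable def maxCombFamily (U : Set V) : Set (ι × Teeth G) :=
  (exists_maximal_isCombFamily G R U).choose

theorem maximal_maxCombFamily (U : Set V) : Maximal (IsCombFamily G R U) (maxCombFamily G R U) :=
  (exists_maximal_isCombFamily G R U).choose_spec

variable (G R) in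
noncomputable def attachCombs (U : Set V) : Set V :=
  U ∪ ⋃ p ∈ maxCombFamily G R U, combVerts R p

theorem subset_attachCombs : U ⊆ attachCombs G R U :=
  subset_union_left

theorem combVerts_subset_attachCombs {p : ι × Teeth G} (hp : p ∈ maxCombFamily G R U) :
    combVerts R p ⊆ attachCombs G R U :=
  subset_union_of_subset_right (subset_biUnion_of_mem hp) _

theorem mk_attachCombs_lt {κ : Cardinal.{u}} (hκ : ℵ₀ < κ) (hU : #U < κ)
    (hF : #(maxCombFamily G R U) < κ) : #(attachCombs G R U) < κ := by
  refine (mk_union_le _ _).trans_lt (add_lt_of_lt hκ.le hU ?_)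
  refine (mk_biUnion_le (combVerts R) _).trans_lt (mul_lt_of_lt hκ.le hF ?_)
  have hcount : ∀ p : maxCombFamily G R U, #(combVerts R p.1) ≤ ℵ₀ := fun p =>
    le_aleph0_iff_set_countable.2 (countable_combVerts R p.1)
  exact (ciSup_le' hcount).trans_lt hκ

/-- Otherwise `p` could be added to the maximal family. -/
theorem IsComb.exists_mem_attachCombs_diff {p : ι × Teeth G} (hp : IsComb G R U p)
    (hspine : ¬ range (R p.1) ⊆ attachCombs G R U) :
    ∃ x ∈ combVerts R p, x ∈ attachCombs G R U \ U := by
  have hpF : p ∉ maxCombFamily G R U := fun hpF =>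
    hspine (subset_union_left.trans (combVerts_subset_attachCombs hpF))
  obtain ⟨q, hq, hpq⟩ := exists_not_disjoint_of_maximal (maximal_maxCombFamily U) hp hpF
  obtain ⟨x, hxp, hxq⟩ := not_disjoint_iff.1 hpq
  exact ⟨x, hxp.1, combVerts_subset_attachCombs hq hxq.1, hxp.2⟩

section Tower

variable {Ω : Type u} [LinearOrder Ω] [WellFoundedLT Ω] {X : Set V}

variable (G R) in
noncomputable def combTower (X : Set V) : Ω → Set V :=
  wellFounded_lt.fix fun α tower => X ∪ ⋃ β : Iio α, attachCombs G R (tower β β.2)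

theorem combTower_eq (α : Ω) :
    combTower G R X α = X ∪ ⋃ β : Iio α, attachCombs G R (combTower G R X β.1) := by
  rw [combTower, WellFounded.fix_eq]

theorem subset_combTower (α : Ω) : X ⊆ combTower G R X α := by
  rw [combTower_eq]
  exact subset_union_left

theorem attachCombs_combTower_subset {α β : Ω} (h : β < α) :
    attachCombs G R (combTower G R X β) ⊆ combTower G R X α := by
  rw [combTower_eq α]
  exact subset_union_of_subset_right
    (subset_iUnion (fun γ : Iio α => attachCombs G R (combTower G R X γ.1)) ⟨β, h⟩) _

theorem mk_combTower_lt {κ : Cardinal.{u}} (hκ : ℵ₀ < κ) (hΩ : #Ω < κ.ord.cof) (hX : #X < κ)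
    (α : Ω) (hsmall : ∀ β < α, #(maxCombFamily G R (combTower G R X β)) < κ) :
    #(combTower G R X α) < κ := by
  induction α using WellFoundedLT.induction with
  | _ α ih =>
    rw [combTower_eq]
    refine (mk_union_le _ _).trans_lt (add_lt_of_lt hκ.le hX ?_)
    refine mk_iUnion_lt_of_lt_cof hκ.le ((mk_set_le _).trans_lt hΩ) fun β => ?_
    exact mk_attachCombs_lt hκ (ih β β.2 fun γ hγ => hsmall γ (hγ.trans β.2)) (hsmall β β.2)

theorem not_forall_mk_maxCombFamily_lt [Uncountable Ω] (hΩ : #Ω < (#ι).ord.cof) {r : ℕ → V}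
    (hRend : ∀ i, RayEquiv G (R i) r) (hdisj : Pairwise fun i j => ∀ n m, R i n ≠ R j m) :
    ¬ ∀ α : Ω, #(maxCombFamily G R (combTower G R (range r) α)) < #ι := by
  intro hsmall
  have hκ : ℵ₀ < #ι := (aleph0_lt_mk_iff.2 ‹_›).trans (hΩ.trans_le (Ordinal.cof_ord_le _))
  have hr : #(range r) < #ι := (le_aleph0_iff_set_countable.2 (countable_range r)).trans_lt hκ
  set T := ⋃ α : Ω, attachCombs G R (combTower G R (range r) α)
  have hT : #T < #ι := mk_iUnion_lt_of_lt_cof hκ.le hΩ fun α =>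
    mk_attachCombs_lt hκ (mk_combTower_lt hκ hΩ hr α fun β _ => hsmall β) (hsmall α)
  obtain ⟨i, hi⟩ := exists_forall_notMem_of_mk_lt hdisj hT
  obtain ⟨S, hS, hcomb⟩ := (hRend i).exists_countable_forall_isComb
  have hnew : ∀ α : Ω, ∃ x ∈ S,
      x ∈ attachCombs G R (combTower G R (range r) α) \ combTower G R (range r) α := by
    intro α
    have hαT : attachCombs G R (combTower G R (range r) α) ⊆ T :=
      subset_iUnion_of_subset α subset_rfl
    obtain ⟨t, ht, htS⟩ := hcomb _ (subset_combTower α)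
      fun n hn => hi n (hαT (subset_attachCombs hn))
    obtain ⟨x, hx, hxnew⟩ := ht.exists_mem_attachCombs_diff fun h => hi 0 (hαT (h ⟨0, rfl⟩))
    exact ⟨x, htS hx, hxnew⟩
  choose x hxS hx using hnew
  have hinj : x.Injective := .of_lt_imp_ne fun α β hαβ h =>
    (hx β).2 (h ▸ attachCombs_combTower_subset hαβ (hx α).1)
  exact not_countable (countable_univ_iff.1 (MapsTo.countable_of_injOn (fun α _ => hxS α)
    hinj.injOn hS))

theorem exists_combTower_mk_maxCombFamily_eq [Uncountable Ω] (hΩ : #Ω < (#ι).ord.cof)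
    {r : ℕ → V} (hRend : ∀ i, RayEquiv G (R i) r)
    (hdisj : Pairwise fun i j => ∀ n m, R i n ≠ R j m) :
    ∃ α : Ω, #(maxCombFamily G R (combTower G R (range r) α)) = #ι ∧
      #(combTower G R (range r) α) < #ι := by
  have hκ : ℵ₀ < #ι := (aleph0_lt_mk_iff.2 ‹_›).trans (hΩ.trans_le (Ordinal.cof_ord_le _))
  obtain ⟨α, hα, hmin⟩ := wellFounded_lt.has_min _
    (not_forall.1 (not_forall_mk_maxCombFamily_lt hΩ hRend hdisj))
  refine ⟨α, (maximal_maxCombFamily _).1.mk_le.antisymm (not_lt.1 hα),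
    mk_combTower_lt hκ hΩ ((le_aleph0_iff_set_countable.2 (countable_range r)).trans_lt hκ) α
      fun β hβ => not_not.1 fun h => hmin β h hβ⟩

end Tower

end EndCombs

theorem stmt_19_general {V : Type u} (G : SimpleGraph V) (kap : Cardinal.{u})
    (hcof : Cardinal.aleph 1 < kap.ord.cof)
    -- an end ε of G, represented by a ray Rε
    (Rε : ℕ → V)
    -- a collection of κ pairwise disjoint rays belonging to ε
    (ι : Type u) (hι : #ι = kap)
    (R : ι → ℕ → V)
    (hRend : ∀ i, RayEquiv G (R i) Rε)
    (hdisj : ∀ i j, i ≠ j → ∀ n m : ℕ, R i n ≠ R j m) :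
    -- then there are a vertex set U of size < κ and κ many internally disjoint
    -- ε–U combs whose spines all lie in the given collection:
    ∃ U : Set V, #U < kap ∧
      ∃ J : Set ι, #J = kap ∧
        ∃ (a b : ι → ℕ → V) (w : ∀ i n, G.Walk (a i n) (b i n)),
          -- each chosen ray is the spine of a comb: it avoids U and carries an
          -- infinite family of disjoint paths to U, meeting U only in their teeth
          (∀ i ∈ J, ∀ n : ℕ, R i n ∉ U) ∧
          (∀ i ∈ J, ∀ n, (w i n).IsPath ∧ a i n ∈ Set.range (R i) ∧ b i n ∈ U) ∧
          (∀ i ∈ J, ∀ n, ∀ x ∈ (w i n).support, x ∈ U → x = b i n) ∧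
          (∀ i ∈ J, ∀ m n : ℕ, m ≠ n → ∀ x ∈ (w i m).support, x ∉ (w i n).support) ∧
          -- the combs are internally disjoint
          (∀ i ∈ J, ∀ j ∈ J, i ≠ j → ∀ x : V,
            x ∈ (Set.range (R i) ∪ ⋃ n, {y | y ∈ (w i n).support}) \ U →
            x ∉ (Set.range (R j) ∪ ⋃ n, {y | y ∈ (w j n).support}) \ U) := by
  subst hι
  have hΩ : #(aleph 1).ord.ToType < (#ι).ord.cof := by rwa [mk_toType, card_ord]
  have : Uncountable (aleph 1).ord.ToType :=
    aleph0_lt_mk_iff.1 (by rw [mk_toType, card_ord]; exact aleph0_lt_aleph_one)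
  have : Nonempty V := ⟨Rε 0⟩
  obtain ⟨α, hfam, hU⟩ := EndCombs.exists_combTower_mk_maxCombFamily_eq hΩ hRend hdisj
  obtain ⟨J, hJ, hcombs⟩ :=
    EndCombs.exists_combs_of_isCombFamily (EndCombs.maximal_maxCombFamily (R := R) _).1
  exact ⟨_, hU, J, hJ.trans hfam, hcombs⟩

theorem stmt_19 {V : Type u} (G : SimpleGraph V) (kap : Cardinal.{u})
    (hcof : Cardinal.aleph 1 < kap.ord.cof)
    -- an end ε of G, represented by a ray Rε
    (Rε : ℕ → V) (hRε : IsRay G Rε)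
    -- a collection of κ pairwise disjoint rays belonging to ε
    (ι : Type u) (hι : #ι = kap)
    (R : ι → ℕ → V) (hR : ∀ i, IsRay G (R i))
    (hRend : ∀ i, RayEquiv G (R i) Rε)
    (hdisj : ∀ i j, i ≠ j → ∀ n m : ℕ, R i n ≠ R j m) :
    -- then there are a vertex set U of size < κ and κ many internally disjoint
    -- ε–U combs whose spines all lie in the given collection:
    ∃ U : Set V, #U < kap ∧
      ∃ J : Set ι, #J = kap ∧
        ∃ (a b : ι → ℕ → V) (w : ∀ i n, G.Walk (a i n) (b i n)),
          -- each chosen ray is the spine of a comb: it avoids U and carries an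
          -- infinite family of disjoint paths to U, meeting U only in their teeth
          (∀ i ∈ J, ∀ n : ℕ, R i n ∉ U) ∧
          (∀ i ∈ J, ∀ n, (w i n).IsPath ∧ a i n ∈ Set.range (R i) ∧ b i n ∈ U) ∧
          (∀ i ∈ J, ∀ n, ∀ x ∈ (w i n).support, x ∈ U → x = b i n) ∧
          (∀ i ∈ J, ∀ m n : ℕ, m ≠ n → ∀ x ∈ (w i m).support, x ∉ (w i n).support) ∧
          -- the combs are internally disjoint
          (∀ i ∈ J, ∀ j ∈ J, i ≠ j → ∀ x : V,
            x ∈ (Set.range (R i) ∪ ⋃ n, {y | y ∈ (w i n).support}) \ U →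
            x ∉ (Set.range (R j) ∪ ⋃ n, {y | y ∈ (w j n).support}) \ U) :=
  stmt_19_general G kap hcof Rε ι hι R hRend hdisj
end
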